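/- arXiv:1504.07850 — 4 statements merged into one kernel-verified Lean document; each statement's English description precedes it below -/
import Mathlib

section
/- Let n ≥ 2, λ > 1, 0 < α ≤ 1, and let σ, w be weights on ℝⁿ. If there is a finite constant 𝒩 with ‖g_λ^{*,α}(fσ)‖_{L²(w dx)} ≤ 𝒩 ‖f‖_{L²(σ)} for all f ∈ L²(σ), then the two-weight A₂ constant satisfies 𝒜₂ ≤ C 𝒩 for a constant C depending only on n, α, λ. -/
open MeasureTheory Set
open scoped ENNReal NNReal BigOperators

noncomputable section

/-- Euclidean space `ℝⁿ`. -/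
abbrev E (n : ℕ) := EuclideanSpace ℝ (Fin n)

/-- An axis-parallel cube in `ℝⁿ`, given by its corner and positive side length. -/
structure Cube (n : ℕ) where
  corner : E n
  side : ℝ
  side_pos : 0 < side

namespace Cube

/-- The (half-open) cube as a subset of `ℝⁿ`. -/
def set {n : ℕ} (Q : Cube n) : Set (E n) :=
  {x | ∀ i, Q.corner i ≤ x i ∧ x i < Q.corner i + Q.side}

/-- The Lebesgue measure `|Q| = ℓ(Q)ⁿ` of a cube. -/
def vol {n : ℕ} (Q : Cube n) : ℝ := Q.side ^ n

/-- The cube concentric with `Q` with side length `C·ℓ(Q)`. -/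
def dilate {n : ℕ} (Q : Cube n) (C : ℝ) : Set (E n) :=
  {x | ∀ i, Q.corner i + Q.side / 2 - C * Q.side / 2 ≤ x i ∧
        x i < Q.corner i + Q.side / 2 + C * Q.side / 2}

/-- Membership in the standard dyadic grid of `ℝⁿ`. -/
def IsDyadic {n : ℕ} (Q : Cube n) : Prop :=
  ∃ k : ℤ, ∃ m : Fin n → ℤ, Q.side = 2 ^ k ∧ ∀ i, Q.corner i = 2 ^ k * m i

/-- The dyadic child of `Q` indexed by `ε ∈ {0,1}ⁿ`. -/
def child {n : ℕ} (Q : Cube n) (ε : Fin n → Bool) : Cube n :=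
  ⟨WithLp.toLp 2 (fun i => Q.corner i + if ε i then Q.side / 2 else 0 : Fin n → ℝ), Q.side / 2,
    half_pos Q.side_pos⟩

end Cube

/-- Distance between two subsets of `ℝⁿ`. -/
def sdist {n : ℕ} (A B : Set (E n)) : ℝ := sInf (Set.image2 dist A B)

/-- A weight: a nonnegative locally integrable function on `ℝⁿ`. -/
def IsWeight {n : ℕ} (σ : E n → ℝ) : Prop :=
  (∀ x, 0 ≤ σ x) ∧ MeasureTheory.LocallyIntegrable σ

/-- `σ(Q) = ∫_Q σ dx`. -/
def cInt {n : ℕ} (σ : E n → ℝ) (Q : Cube n) : ℝ := ∫ x in Q.set, σ x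

/-- The square `𝒜₂²` of the two-weight A₂ constant, as an extended real. -/
def A2sq {n : ℕ} (σ w : E n → ℝ) : ℝ≥0∞ :=
  ⨆ Q : Cube n, ENNReal.ofReal ((cInt σ Q / Q.vol) * (cInt w Q / Q.vol))

/-- `P_t^α` applied to the measure `g dx` (`g` a possibly signed density):
`P_t^α(g dx)(y) = ∫ t^α (t² + |y−z|²)^{-(n+α)/2} g(z) dz`. -/
def Pt (n : ℕ) (α : ℝ) (g : E n → ℝ) (y : E n) (t : ℝ) : ℝ :=
  ∫ z, t ^ α / (t ^ 2 + dist y z ^ 2) ^ (((n : ℝ) + α) / 2) * g z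

/-- `P_t^α` applied to a positive measure `ν`. -/
def PtM (n : ℕ) (α : ℝ) (ν : Measure (E n)) (y : E n) (t : ℝ) : ℝ :=
  ∫ z, t ^ α / (t ^ 2 + dist y z ^ 2) ^ (((n : ℝ) + α) / 2) ∂ν

/-- `|∇P_t^α (g dx)(y,t)|²`, where `∇ = (∂_{y₁},…,∂_{yₙ},∂_t)`. -/
def gradPSq (n : ℕ) (α : ℝ) (g : E n → ℝ) (y : E n) (t : ℝ) : ℝ :=
  (∑ i : Fin n,
      (deriv (fun s : ℝ => Pt n α g (y + s • EuclideanSpace.single i (1 : ℝ)) t) 0) ^ 2)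
    + (deriv (fun s : ℝ => Pt n α g y s) t) ^ 2

/-- The square of the Littlewood–Paley function `g_λ^{*,α}(g dx)(x)`. -/
def gStarSq (n : ℕ) (α lam : ℝ) (g : E n → ℝ) (x : E n) : ℝ≥0∞ :=
  ∫⁻ y, ∫⁻ t in Set.Ioi (0 : ℝ),
    ENNReal.ofReal
      ((t / (t + dist x y)) ^ ((n : ℝ) * lam) * gradPSq n α g y t / t ^ ((n : ℝ) - 1))

/-- `‖f‖²_{L²(σ)}` as an extended real. -/
def l2sq {n : ℕ} (σ f : E n → ℝ) : ℝ≥0∞ := ∫⁻ x, ENNReal.ofReal (f x ^ 2 * σ x)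

/-- The square `ℬ²` of the testing constant, as an extended real. -/
def Bsq (n : ℕ) (α lam : ℝ) (σ w : E n → ℝ) : ℝ≥0∞ :=
  ⨆ Q : Cube n,
    (∫⁻ y, ∫⁻ t in Set.Ioc (0 : ℝ) Q.side, ∫⁻ x in Q.set,
        ENNReal.ofReal ((t / (t + dist x y)) ^ ((n : ℝ) * lam)
          * gradPSq n α (Q.set.indicator σ) y t * w x / t ^ ((n : ℝ) - 1)))
      / ENNReal.ofReal (cInt σ Q)

/-- The two-weight norm inequality `‖g_λ^{*,α}(fσ)‖_{L²(w)} ≤ N ‖f‖_{L²(σ)}` (in squared form). -/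
def OpBound (n : ℕ) (α lam : ℝ) (σ w : E n → ℝ) (N : ℝ) : Prop :=
  ∀ f : E n → ℝ, Measurable f → l2sq σ f < ⊤ →
    (∫⁻ x, gStarSq n α lam (fun z => f z * σ z) x * ENNReal.ofReal (w x))
      ≤ ENNReal.ofReal (N ^ 2) * l2sq σ f

/-- The family `𝒞_α` of test functions for the intrinsic square function. -/
def CAlpha (n : ℕ) (α : ℝ) (φ : E n → ℝ) : Prop :=
  Function.support φ ⊆ Metric.closedBall 0 1 ∧ (∫ x, φ x) = 0 ∧
    ∀ x x' : E n, |φ x - φ x'| ≤ ‖x - x'‖ ^ α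

/-- `A_α(g dx)(y,t) = sup_{φ ∈ 𝒞_α} |(g dx) * φ_t(y)|`. -/
def AIntr (n : ℕ) (α : ℝ) (g : E n → ℝ) (y : E n) (t : ℝ) : ℝ :=
  ⨆ φ : {φ : E n → ℝ // CAlpha n α φ},
    |∫ z, t ^ (-(n : ℝ)) * φ.1 (t⁻¹ • (y - z)) * g z|

/-- The square of the intrinsic square function `g_{λ,α}^*(g dx)(x)`. -/
def gIntrSq (n : ℕ) (α lam : ℝ) (g : E n → ℝ) (x : E n) : ℝ≥0∞ :=
  ∫⁻ y, ∫⁻ t in Set.Ioi (0 : ℝ),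
    ENNReal.ofReal
      ((t / (t + dist x y)) ^ ((n : ℝ) * lam) * AIntr n α g y t ^ 2 / t ^ ((n : ℝ) + 1))

/-- The square `ℬ_α²` of the intrinsic testing constant. -/
def BIntrSq (n : ℕ) (α lam : ℝ) (σ w : E n → ℝ) : ℝ≥0∞ :=
  ⨆ Q : Cube n,
    (∫⁻ y, ∫⁻ t in Set.Ioc (0 : ℝ) Q.side, ∫⁻ x in Q.set,
        ENNReal.ofReal ((t / (t + dist x y)) ^ ((n : ℝ) * lam)
          * AIntr n α (Q.set.indicator σ) y t ^ 2 * w x / t ^ ((n : ℝ) + 1)))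
      / ENNReal.ofReal (cInt σ Q)

/-- The two-weight norm inequality for the intrinsic square function (in squared form). -/
def OpBoundIntr (n : ℕ) (α lam : ℝ) (σ w : E n → ℝ) (N : ℝ) : Prop :=
  ∀ f : E n → ℝ, Measurable f → l2sq σ f < ⊤ →
    (∫⁻ x, gIntrSq n α lam (fun z => f z * σ z) x * ENNReal.ofReal (w x))
      ≤ ENNReal.ofReal (N ^ 2) * l2sq σ f

/-- A dyadic cube `I` is good (w.r.t. parameters `r`, `γ`) if there is no dyadic `J` with
`ℓ(J) ≥ 2^r ℓ(I)` and `dist(I, ∂J) ≤ ℓ(I)^γ ℓ(J)^{1−γ}`. -/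
def IsGood (n : ℕ) (r : ℕ) (γ : ℝ) (I : Cube n) : Prop :=
  ¬ ∃ J : Cube n, J.IsDyadic ∧ 2 ^ r * I.side ≤ J.side ∧
      sdist I.set (frontier J.set) ≤ I.side ^ γ * J.side ^ (1 - γ)

/-- The defining conditions for the Whitney family `𝒲_I`. -/
def WhitneyPred (n : ℕ) (r : ℕ) (γ : ℝ) (I K : Cube n) : Prop :=
  K.IsDyadic ∧ K.set ⊆ I.set ∧ 2 ^ r * K.side ≤ I.side ∧
    K.side ^ γ * I.side ^ (1 - γ) ≤ sdist K.set (frontier I.set)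

/-- `K ∈ 𝒲_I`: `K` is a maximal dyadic cube satisfying the Whitney conditions in `I`. -/
def InWhitney (n : ℕ) (r : ℕ) (γ : ℝ) (I K : Cube n) : Prop :=
  WhitneyPred n r γ I K ∧
    ∀ K' : Cube n, WhitneyPred n r γ I K' → K.set ⊆ K'.set → K'.set = K.set

/-- The size and Hölder conditions on `ψ` with constant `C₀`. -/
def PsiCond (n : ℕ) (α C₀ : ℝ) (ψ : E n → ℝ) : Prop :=
  (∀ x : E n, |ψ x| ≤ C₀ * (1 + ‖x‖) ^ (-(n : ℝ) - α)) ∧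
    ∀ x x' : E n, |ψ x - ψ x'| ≤ C₀ * ‖x - x'‖ ^ α * (1 + ‖x‖) ^ (-(n : ℝ) - α)

/-- `ψ_t * (g dx)(u) = ∫ t^{-n} ψ((u−z)/t) g(z) dz`. -/
def psiConv (n : ℕ) (ψ : E n → ℝ) (t : ℝ) (g : E n → ℝ) (u : E n) : ℝ :=
  ∫ z, t ^ (-(n : ℝ)) * ψ (t⁻¹ • (u - z)) * g z

/-- The average `E_Q^σ f = σ(Q)⁻¹ ∫_Q f σ dx` (with the convention `0` if `σ(Q) = 0`). -/
def avg (n : ℕ) (σ f : E n → ℝ) (Q : Cube n) : ℝ :=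
  (∫ x in Q.set, f x * σ x) / cInt σ Q

/-- The martingale difference `Δ_Q^σ f = Σ_{Q' child of Q} (E_{Q'}^σ f − E_Q^σ f) 1_{Q'}`. -/
def mdiff (n : ℕ) (σ f : E n → ℝ) (Q : Cube n) (x : E n) : ℝ :=
  ∑ ε : Fin n → Bool,
    ((Q.child ε).set).indicator (fun _ => avg n σ f (Q.child ε) - avg n σ f Q) x

/-- The Poisson average `𝒫_α(K, g dx)` of a signed density `g`. -/
def poissonAvg (n : ℕ) (α : ℝ) (K : Cube n) (g : E n → ℝ) : ℝ :=
  ∫ x, K.side ^ α / (K.side + Metric.infDist x K.set) ^ ((n : ℝ) + α) * g x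

/-- The Poisson average `𝒫_α(K, g dx)` of a nonnegative density `g`, as an extended real. -/
def poissonAvgD (n : ℕ) (α : ℝ) (K : Cube n) (g : E n → ℝ) : ℝ≥0∞ :=
  ∫⁻ x, ENNReal.ofReal (K.side ^ α / (K.side + Metric.infDist x K.set) ^ ((n : ℝ) + α) * g x)

/-- The Poisson average `𝒫_α(K, ν)` of a positive measure `ν`. -/
def poissonAvgM (n : ℕ) (α : ℝ) (K : Cube n) (ν : Measure (E n)) : ℝ≥0∞ :=
  ∫⁻ x, ENNReal.ofReal (K.side ^ α / (K.side + Metric.infDist x K.set) ^ ((n : ℝ) + α)) ∂ν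




/-- the derivative in `t` of the fractional Poisson kernel. -/
def kerD (α p t d : ℝ) : ℝ :=
  (α * t ^ (α - 1) * (t ^ 2 + d ^ 2) ^ p -
      t ^ α * (2 * t * p * (t ^ 2 + d ^ 2) ^ (p - 1))) / ((t ^ 2 + d ^ 2) ^ p) ^ 2

lemma ker_hasDerivAt (α p : ℝ) {t : ℝ} (ht : 0 < t) (d : ℝ) :
    HasDerivAt (fun s : ℝ => s ^ α / (s ^ 2 + d ^ 2) ^ p) (kerD α p t d) t := by
  have hu : 0 < t ^ 2 + d ^ 2 := by positivity
  have h1 : HasDerivAt (fun s : ℝ => s ^ α) (α * t ^ (α - 1)) t := by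
    simpa [mul_comm] using Real.hasDerivAt_rpow_const (p := α) (Or.inl ht.ne')
  have h2 : HasDerivAt (fun s : ℝ => s ^ 2 + d ^ 2) (2 * t) t := by
    simpa using (hasDerivAt_pow 2 t).add_const (d ^ 2)
  have h3 : HasDerivAt (fun s : ℝ => (s ^ 2 + d ^ 2) ^ p)
      (2 * t * p * (t ^ 2 + d ^ 2) ^ (p - 1)) t := h2.rpow_const (Or.inl hu.ne')
  exact h1.div h3 (by positivity)

lemma two_rpow_helper {t : ℝ} (ht : 0 < t) (q : ℝ) : ((t:ℝ)^2) ^ q = t ^ (2*q) := by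
  rw [← Real.rpow_natCast t 2, ← Real.rpow_mul ht.le]
  norm_num

lemma ker_neg (n : ℕ) (hn : 2 ≤ n) {α t d : ℝ} (hα0 : 0 < α) (hα1 : α ≤ 1)
    (ht : 0 < t) (hd : 0 ≤ d) (hdt : d ≤ t) :
    kerD α (((n:ℝ) + α)/2) t d ≤ -((2:ℝ) ^ (-((n:ℝ)+α)) * t ^ (-(n:ℝ)-1)) := by
  set p : ℝ := ((n:ℝ) + α)/2 with hp
  have hn2 : (2:ℝ) ≤ (n:ℝ) := by exact_mod_cast hn
  have hp1 : 1 ≤ p := by rw [hp]; linarith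
  set u : ℝ := t ^ 2 + d ^ 2 with hu
  have hup : 0 < u := by positivity
  have hu1 : t ^ 2 ≤ u := by nlinarith
  have hu2 : u ≤ 2 * t ^ 2 := by nlinarith
  have hta : t ^ α = t ^ (α - 1) * t := by
    rw [show α = (α - 1) + 1 by ring, Real.rpow_add_one ht.ne']; ring_nf
  have hua : u ^ p = u ^ (p - 1) * u := by
    rw [show p = (p - 1) + 1 by ring, Real.rpow_add_one hup.ne']; ring_nf
  have hker : kerD α p t d
      = -(t ^ (α - 1) * u ^ (p - 1) * (2 * p * t ^ 2 - α * u) / (u ^ p) ^ 2) := by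
    rw [kerD, ← hu]
    rw [hta, hua]; ring
  rw [hker, neg_le_neg_iff]
  have hnum : t ^ (α - 1) * (t^2) ^ (p - 1) * t ^ 2
      ≤ t ^ (α - 1) * u ^ (p - 1) * (2 * p * t ^ 2 - α * u) := by
    have h1 : (t^2) ^ (p-1) ≤ u ^ (p-1) :=
      Real.rpow_le_rpow (by positivity) hu1 (by linarith)
    have h2 : t ^ 2 ≤ 2 * p * t ^ 2 - α * u := by
      have : 2 * p = (n:ℝ) + α := by rw [hp]; ring
      nlinarith
    have hpos : (0:ℝ) ≤ t ^ (α - 1) := by positivity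
    have hpos2 : (0:ℝ) < (t^2) ^ (p-1) := by positivity
    calc t ^ (α - 1) * (t^2) ^ (p - 1) * t ^ 2
        ≤ t ^ (α - 1) * u ^ (p - 1) * t ^ 2 := by
          apply mul_le_mul_of_nonneg_right _ (by positivity)
          exact mul_le_mul_of_nonneg_left h1 hpos
      _ ≤ t ^ (α - 1) * u ^ (p - 1) * (2 * p * t ^ 2 - α * u) := by
          apply mul_le_mul_of_nonneg_left h2 (by positivity)
  have hden : (u ^ p) ^ 2 ≤ ((2 * t ^ 2) ^ p) ^ 2 := by
    have : u ^ p ≤ (2 * t ^ 2) ^ p :=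
      Real.rpow_le_rpow hup.le hu2 (by linarith)
    exact pow_le_pow_left₀ (by positivity) this 2
  have key : t ^ (α - 1) * (t^2) ^ (p - 1) * t ^ 2 / ((2 * t ^ 2) ^ p) ^ 2
      ≤ t ^ (α - 1) * u ^ (p - 1) * (2 * p * t ^ 2 - α * u) / (u ^ p) ^ 2 := by
    apply div_le_div₀ (le_trans (by positivity) hnum) hnum (by positivity) hden
  refine le_trans (le_of_eq ?_) key
  rw [Real.mul_rpow (by norm_num) (by positivity), two_rpow_helper ht,
    two_rpow_helper ht]
  rw [mul_pow, ← Real.rpow_natCast ((2:ℝ) ^ p) 2, ← Real.rpow_natCast (t ^ (2*p)) 2,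
    ← Real.rpow_mul (by norm_num : (0:ℝ) ≤ 2), ← Real.rpow_mul ht.le]
  rw [show (t:ℝ) ^ 2 = t ^ ((2:ℕ):ℝ) by rw [Real.rpow_natCast]]
  rw [← Real.rpow_add ht, ← Real.rpow_add ht]
  rw [div_eq_mul_inv, mul_inv, ← Real.rpow_neg (by norm_num : (0:ℝ) ≤ 2),
    ← Real.rpow_neg ht.le]
  rw [mul_comm ((2:ℝ) ^ (-(p * (2:ℕ)))) _, ← mul_assoc, ← Real.rpow_add ht]
  rw [mul_comm]
  congr 1
  · congr 1; rw [hp]; ring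
  · congr 1; push_cast; rw [hp]; ring

lemma ker_abs (n : ℕ) (hn : 2 ≤ n) {α t : ℝ} (d : ℝ) (hα0 : 0 < α) (hα1 : α ≤ 1)
    (ht : 0 < t) :
    |kerD α (((n:ℝ) + α)/2) t d| ≤ (2*(n:ℝ)+2) * t ^ (-(n:ℝ)-1) := by
  set p : ℝ := ((n:ℝ) + α)/2 with hp
  have hn2 : (2:ℝ) ≤ (n:ℝ) := by exact_mod_cast hn
  have hp1 : 1 ≤ p := by rw [hp]; linarith
  set u : ℝ := t ^ 2 + d ^ 2 with hu
  have hup : 0 < u := by positivity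
  have hu1 : t ^ 2 ≤ u := by nlinarith
  have hta : t ^ α = t ^ (α - 1) * t := by
    rw [show α = (α - 1) + 1 by ring, Real.rpow_add_one ht.ne']; ring_nf
  have hua : u ^ p = u ^ (p - 1) * u := by
    rw [show p = (p - 1) + 1 by ring, Real.rpow_add_one hup.ne']; ring_nf
  have hker : kerD α p t d
      = t ^ (α - 1) * u ^ (p - 1) * (α * u - 2 * p * t ^ 2) / (u ^ p) ^ 2 := by
    rw [kerD, ← hu, hta, hua]; ring
  rw [hker, abs_div, abs_of_nonneg (by positivity : (0:ℝ) ≤ (u ^ p)^2)]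
  have h2p : 2 * p = (n:ℝ) + α := by rw [hp]; ring
  have habs : |t ^ (α - 1) * u ^ (p - 1) * (α * u - 2 * p * t ^ 2)|
      ≤ t ^ (α - 1) * u ^ (p - 1) * ((2*(n:ℝ)+2) * u) := by
    rw [abs_mul, abs_of_nonneg (by positivity : (0:ℝ) ≤ t ^ (α-1) * u ^ (p-1))]
    apply mul_le_mul_of_nonneg_left _ (by positivity)
    calc |α * u - 2 * p * t ^ 2| ≤ α * u + 2 * p * t ^ 2 := by
          refine (abs_sub _ _).trans ?_
          rw [abs_of_nonneg (by positivity), abs_of_nonneg (by positivity)]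
      _ ≤ (2*(n:ℝ)+2) * u := by nlinarith
  refine le_trans (div_le_div₀ (le_trans (abs_nonneg _) habs) habs (by positivity) le_rfl) ?_
  have e1 : t ^ (α-1) * u ^ (p-1) * ((2*(n:ℝ)+2) * u) / (u ^ p) ^ 2
      = (2*(n:ℝ)+2) * (t ^ (α-1) / u ^ p) := by
    rw [sq, hua]; field_simp
  rw [e1]
  have e2 : (2*(n:ℝ)+2) * (t ^ (α-1) / u ^ p)
      ≤ (2*(n:ℝ)+2) * (t ^ (α-1) / (t^2) ^ p) := by
    apply mul_le_mul_of_nonneg_left _ (by positivity)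
    exact div_le_div_of_nonneg_left (by positivity) (by positivity)
      (Real.rpow_le_rpow (by positivity) hu1 (by linarith))
  refine e2.trans (le_of_eq ?_)
  rw [two_rpow_helper ht, div_eq_mul_inv, ← Real.rpow_neg ht.le, ← Real.rpow_add ht]
  rw [show α - 1 + -(2*p) = -(n:ℝ)-1 by rw [hp]; ring]

lemma cube_measurableSet {n : ℕ} (Q : Cube n) : MeasurableSet Q.set := by
  have : Q.set = ⋂ i, {x : E n | x i ∈ Set.Ico (Q.corner i) (Q.corner i + Q.side)} := by
    ext x; simp [Cube.set, Set.mem_Ico]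
  rw [this]
  exact MeasurableSet.iInter fun i =>
    ((measurable_pi_apply i).comp (WithLp.measurable_ofLp 2 (Fin n → ℝ))) measurableSet_Ico

lemma cube_dist_le {n : ℕ} (Q : Cube n) {x z : E n} (hx : x ∈ Q.set) (hz : z ∈ Q.set) :
    dist x z ≤ (n : ℝ) * Q.side := by
  rcases Nat.eq_zero_or_pos n with h0 | h0
  · subst h0
    simp [Subsingleton.elim x z]
  have h1 : dist x z = Real.sqrt (∑ i, dist (x i) (z i) ^ 2) := EuclideanSpace.dist_eq x z
  have h2 : ∑ i, dist (x i) (z i) ^ 2 ≤ ((n:ℝ) * Q.side) ^ 2 := by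
    have hb : ∀ i, dist (x i) (z i) ^ 2 ≤ Q.side ^ 2 := by
      intro i
      have hxi := hx i; have hzi := hz i
      rw [Real.dist_eq, sq_abs]
      nlinarith [hxi.1, hxi.2, hzi.1, hzi.2]
    calc ∑ i, dist (x i) (z i) ^ 2 ≤ ∑ _i : Fin n, Q.side ^ 2 :=
          Finset.sum_le_sum fun i _ => hb i
      _ = (n:ℝ) * Q.side ^ 2 := by simp [mul_comm]
      _ ≤ ((n:ℝ) * Q.side) ^ 2 := by
          have hn1 : (1:ℝ) ≤ (n:ℝ) := by exact_mod_cast h0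
          nlinarith [Q.side_pos]
  rw [h1]
  calc Real.sqrt (∑ i, dist (x i) (z i) ^ 2) ≤ Real.sqrt (((n:ℝ) * Q.side) ^ 2) :=
        Real.sqrt_le_sqrt h2
    _ = (n:ℝ) * Q.side := by
        rw [Real.sqrt_sq (mul_nonneg (Nat.cast_nonneg n) Q.side_pos.le)]

lemma cube_corner_mem {n : ℕ} (Q : Cube n) : Q.corner ∈ Q.set := by
  intro i; exact ⟨le_rfl, by linarith [Q.side_pos]⟩

lemma cube_isBounded {n : ℕ} (Q : Cube n) : Bornology.IsBounded Q.set := by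
  apply Metric.isBounded_iff.2
  exact ⟨2 * ((n:ℝ) * Q.side), fun x hx y hy => by
    calc dist x y ≤ dist x Q.corner + dist Q.corner y := dist_triangle _ _ _
      _ ≤ (n:ℝ) * Q.side + (n:ℝ) * Q.side := add_le_add
          (cube_dist_le Q hx (cube_corner_mem Q))
          (cube_dist_le Q (cube_corner_mem Q) hy)
      _ = 2 * ((n:ℝ) * Q.side) := by ring⟩

lemma weight_integrableOn {n : ℕ} {σ : E n → ℝ} (hσ : IsWeight σ) (Q : Cube n) :
    IntegrableOn σ Q.set := by
  refine (hσ.2.integrableOn_isCompact ?_).mono_set subset_closure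
  exact Metric.isCompact_of_isClosed_isBounded isClosed_closure (cube_isBounded Q).closure

lemma cube_volume {n : ℕ} (Q : Cube n) : volume Q.set = ENNReal.ofReal (Q.side ^ n) := by
  have hset : Q.set = (MeasurableEquiv.toLp 2 (Fin n → ℝ)).symm ⁻¹'
      (Set.univ.pi fun i => Set.Ico (Q.corner i) (Q.corner i + Q.side)) := by
    ext x; simp [Cube.set, Set.mem_pi]
  rw [hset, (EuclideanSpace.volume_preserving_symm_measurableEquiv_toLp (Fin n)).measure_preimage
    (MeasurableSet.univ_pi fun i => measurableSet_Ico).nullMeasurableSet]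
  rw [volume_pi_pi]
  simp only [Real.volume_Ico, add_sub_cancel_left]
  rw [Finset.prod_const, Finset.card_univ, Fintype.card_fin,
    ← ENNReal.ofReal_pow Q.side_pos.le]



lemma ker_nonneg {α p t : ℝ} (d : ℝ) (ht : 0 < t) :
    0 ≤ t ^ α / (t ^ 2 + d ^ 2) ^ p := by positivity

lemma ker_le (n : ℕ) {α t : ℝ} (d : ℝ) (hα0 : 0 < α) (ht : 0 < t) :
    t ^ α / (t ^ 2 + d ^ 2) ^ (((n:ℝ) + α)/2) ≤ t ^ (-(n:ℝ)) := by
  set p : ℝ := ((n:ℝ) + α)/2 with hp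
  have hple : (0:ℝ) ≤ p := by positivity
  have h1 : t ^ α / (t ^ 2 + d ^ 2) ^ p ≤ t ^ α / (t ^ 2) ^ p := by
    apply div_le_div_of_nonneg_left (by positivity) (by positivity)
    exact Real.rpow_le_rpow (by positivity) (by nlinarith) hple
  refine h1.trans (le_of_eq ?_)
  rw [two_rpow_helper ht, div_eq_mul_inv, ← Real.rpow_neg ht.le, ← Real.rpow_add ht]
  rw [show α + -(2*p) = -(n:ℝ) by rw [hp]; ring]

lemma ker_measurable {n : ℕ} {p : ℝ} (α t : ℝ) (hp : 1 ≤ p) (y : E n) :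
    Measurable (fun z : E n => kerD α p t (dist y z)) := by
  have hd : Continuous fun z : E n => t ^ 2 + dist y z ^ 2 :=
    continuous_const.add ((continuous_const.dist continuous_id).pow 2)
  have h1 : Measurable fun z : E n => (t ^ 2 + dist y z ^ 2) ^ p :=
    (hd.rpow_const (fun x => Or.inr (by linarith))).measurable
  have h2 : Measurable fun z : E n => (t ^ 2 + dist y z ^ 2) ^ (p - 1) :=
    (hd.rpow_const (fun x => Or.inr (by linarith))).measurable
  unfold kerD
  exact ((measurable_const.mul h1).sub
    ((measurable_const.mul h2).const_mul _)).div (h1.pow_const 2)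

lemma Pt_hasDerivAt {n : ℕ} (hn : 2 ≤ n) {α : ℝ} (hα0 : 0 < α) (hα1 : α ≤ 1)
    {g : E n → ℝ} (hg : Integrable g) (hgm : AEMeasurable g volume) (y : E n) {t₀ : ℝ} (ht₀ : 0 < t₀) :
    Integrable (fun z => kerD α (((n:ℝ)+α)/2) t₀ (dist y z) * g z) ∧
    HasDerivAt (fun t => Pt n α g y t)
      (∫ z, kerD α (((n:ℝ)+α)/2) t₀ (dist y z) * g z) t₀ := by
  set p : ℝ := ((n:ℝ) + α)/2 with hp
  have hn2 : (2:ℝ) ≤ (n:ℝ) := by exact_mod_cast hn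
  have hp1 : 1 ≤ p := by rw [hp]; linarith
  have hKm : ∀ t : ℝ, Measurable fun z : E n => t ^ α / (t ^ 2 + dist y z ^ 2) ^ p := by
    intro t
    have hd : Continuous fun z : E n => t ^ 2 + dist y z ^ 2 :=
      continuous_const.add ((continuous_const.dist continuous_id).pow 2)
    exact measurable_const.div
      ((hd.rpow_const (fun x => Or.inr (by positivity))).measurable)
  have key := hasDerivAt_integral_of_dominated_loc_of_deriv_le
    (F := fun t z => t ^ α / (t ^ 2 + dist y z ^ 2) ^ p * g z)
    (F' := fun t z => kerD α p t (dist y z) * g z)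
    (x₀ := t₀) (s := Metric.ball t₀ (t₀/2)) (μ := volume)
    (bound := fun z => (2*(n:ℝ)+2) * (t₀/2) ^ (-(n:ℝ)-1) * |g z|)
    (Metric.ball_mem_nhds t₀ (half_pos ht₀))
    (Filter.Eventually.of_forall fun t => ((hKm t).aemeasurable.mul hgm).aestronglyMeasurable)
    ?_ (((ker_measurable α t₀ hp1 y).aemeasurable.mul hgm).aestronglyMeasurable) ?_ ?_ ?_
  · exact ⟨key.1, key.2⟩
  · -- integrability of F t₀
    refine (hg.norm.const_mul (t₀ ^ (-(n:ℝ)))).mono'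
      (((hKm t₀).aemeasurable.mul hgm).aestronglyMeasurable) ?_
    refine Filter.Eventually.of_forall fun z => ?_
    rw [norm_mul, Real.norm_eq_abs, Real.norm_eq_abs,
      abs_of_nonneg (ker_nonneg (dist y z) ht₀)]
    exact mul_le_mul_of_nonneg_right (ker_le n (dist y z) hα0 ht₀) (abs_nonneg _)
  · -- bound
    refine Filter.Eventually.of_forall fun z => fun t htball => ?_
    have htpos : t₀/2 < t := by
      have := Metric.mem_ball.1 htball
      rw [Real.dist_eq] at this
      cases abs_lt.1 this with
      | intro h1 h2 => linarith
    have ht : 0 < t := lt_trans (half_pos ht₀) htpos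
    rw [norm_mul, Real.norm_eq_abs, Real.norm_eq_abs]
    refine mul_le_mul_of_nonneg_right ?_ (abs_nonneg _)
    refine (ker_abs n hn (dist y z) hα0 hα1 ht).trans ?_
    exact mul_le_mul_of_nonneg_left
      (Real.rpow_le_rpow_of_nonpos (half_pos ht₀) htpos.le (by linarith)) (by positivity)
  · exact hg.norm.const_mul _
  · -- differentiability
    refine Filter.Eventually.of_forall fun z => fun t htball => ?_
    have htpos : t₀/2 < t := by
      have := Metric.mem_ball.1 htball
      rw [Real.dist_eq] at this
      cases abs_lt.1 this with
      | intro h1 h2 => linarith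
    exact (ker_hasDerivAt α p (lt_trans (half_pos ht₀) htpos) (dist y z)).mul_const (g z)



lemma indicator_weight_integrable {n : ℕ} {σ : E n → ℝ} (hσ : IsWeight σ) (Q : Cube n) :
    Integrable (Q.set.indicator σ) := by
  exact (integrable_indicator_iff (cube_measurableSet Q)).mpr (weight_integrableOn hσ Q)

lemma Pt_deriv_le {n : ℕ} (hn : 2 ≤ n) {α : ℝ} (hα0 : 0 < α) (hα1 : α ≤ 1)
    {σ : E n → ℝ} (hσ : IsWeight σ) (Q : Cube n)
    {y : E n} (hy : y ∈ Q.set) {t : ℝ}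
    (hts : (n : ℝ) * Q.side ≤ t) :
    deriv (fun s => Pt n α (Q.set.indicator σ) y s) t
      ≤ -((2:ℝ) ^ (-((n:ℝ)+α)) * t ^ (-(n:ℝ)-1) * cInt σ Q) := by
  have hn2 : (2:ℝ) ≤ (n:ℝ) := by exact_mod_cast hn
  have ht0 : 0 < t := lt_of_lt_of_le (mul_pos (by linarith : (0:ℝ) < (n:ℝ)) Q.side_pos) hts
  have hg : Integrable (Q.set.indicator σ) := indicator_weight_integrable hσ Q
  have hgm : AEMeasurable (Q.set.indicator σ) volume :=
    (hσ.2.aestronglyMeasurable.aemeasurable).indicator (cube_measurableSet Q)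
  obtain ⟨hint, hDer⟩ := Pt_hasDerivAt hn hα0 hα1 hg hgm y ht0
  rw [hDer.deriv]
  have hmono : ∫ z, kerD α (((n:ℝ)+α)/2) t (dist y z) * (Q.set.indicator σ) z
      ≤ ∫ z, (-((2:ℝ) ^ (-((n:ℝ)+α)) * t ^ (-(n:ℝ)-1))) * (Q.set.indicator σ) z := by
    refine integral_mono hint (hg.const_mul _) ?_
    intro z
    by_cases hz : z ∈ Q.set
    · simp only [Set.indicator_of_mem hz]
      refine mul_le_mul_of_nonneg_right ?_ (hσ.1 z)
      exact ker_neg n hn hα0 hα1 ht0 dist_nonneg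
        (le_trans (cube_dist_le Q hy hz) (le_trans (by nlinarith [Q.side_pos]) hts))
    · simp [Set.indicator_of_notMem hz]
  refine hmono.trans (le_of_eq ?_)
  rw [integral_const_mul, integral_indicator (cube_measurableSet Q)]
  rw [show cInt σ Q = ∫ x in Q.set, σ x from rfl]
  ring

lemma ell_pow_eq {ℓ : ℝ} (hℓ : 0 < ℓ) (n : ℕ) :
    (ℓ ^ (-(n:ℝ)-1)) ^ 2 / ℓ ^ ((n:ℝ)-1) * ((n:ℝ)*ℓ) * ℓ ^ n
      = (n:ℝ) * (ℓ ^ n * ℓ ^ n)⁻¹ := by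
  have key : ∀ a b : ℝ, ℓ ^ a * ℓ ^ b = ℓ ^ (a+b) := fun a b => (Real.rpow_add hℓ a b).symm
  have h1 : (ℓ ^ (-(n:ℝ)-1)) ^ 2 / ℓ ^ ((n:ℝ)-1) * ((n:ℝ)*ℓ) * ℓ ^ n
      = (n:ℝ) * (ℓ ^ (-(n:ℝ)-1) * ℓ ^ (-(n:ℝ)-1) * ℓ ^ (-((n:ℝ)-1)) * ℓ ^ (1:ℝ) * ℓ ^ ((n:ℝ))) := by
    rw [← Real.rpow_natCast ℓ n, Real.rpow_one, sq, div_eq_mul_inv, ← Real.rpow_neg hℓ.le]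
    ring
  rw [h1, key, key, key, key]
  rw [← Real.rpow_natCast ℓ n, key, ← Real.rpow_neg hℓ.le]
  rw [show (-(n:ℝ)-1 + (-(n:ℝ)-1) + -((n:ℝ)-1) + 1 + (n:ℝ)) = -((n:ℝ)+(n:ℝ)) by ring]


lemma pointwise_lower {n : ℕ} (hn : 2 ≤ n) {α lam : ℝ} (hlam : 1 < lam)
    (hα0 : 0 < α) (hα1 : α ≤ 1)
    {σ : E n → ℝ} (hσ : IsWeight σ) (Q : Cube n)
    {x y : E n} (hx : x ∈ Q.set) (hy : y ∈ Q.set) {t : ℝ}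
    (ht1 : (n:ℝ) * Q.side < t) (ht2 : t ≤ 2*(n:ℝ)*Q.side) :
    (2:ℝ)^(-((n:ℝ)*lam)) *
        ((2:ℝ) ^ (-((n:ℝ)+α)) * (2*(n:ℝ)*Q.side) ^ (-(n:ℝ)-1) * cInt σ Q)^2
      / (2*(n:ℝ)*Q.side) ^ ((n:ℝ)-1)
    ≤ (t / (t + dist x y)) ^ ((n:ℝ)*lam) * gradPSq n α (Q.set.indicator σ) y t
        / t ^ ((n:ℝ)-1) := by
  have hn2 : (2:ℝ) ≤ (n:ℝ) := by exact_mod_cast hn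
  have hℓ : 0 < Q.side := Q.side_pos
  have hnl : 0 < (n:ℝ) * Q.side := mul_pos (by linarith) hℓ
  have ht0 : 0 < t := lt_trans hnl ht1
  set S := cInt σ Q with hS
  have hS0 : 0 ≤ S := setIntegral_nonneg (cube_measurableSet Q) fun z _ => hσ.1 z
  set c₁ : ℝ := (2:ℝ) ^ (-((n:ℝ)+α)) with hc₁
  have hc₁0 : 0 < c₁ := Real.rpow_pos_of_pos two_pos _
  set m : ℝ := 2*(n:ℝ)*Q.side with hm
  have hm0 : 0 < m := by rw [hm]; nlinarith
  set B : ℝ := c₁ * m ^ (-(n:ℝ)-1) * S with hB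
  have hB0 : 0 ≤ B :=
    mul_nonneg (mul_nonneg hc₁0.le (Real.rpow_nonneg hm0.le _)) hS0
  have hd : dist x y ≤ t := le_trans (cube_dist_le Q hx hy) ht1.le
  have hratio : (2:ℝ)⁻¹ ≤ t / (t + dist x y) := by
    rw [le_div_iff₀ (by positivity)]
    have := dist_nonneg (x := x) (y := y)
    nlinarith
  have hpow : (2:ℝ)^(-((n:ℝ)*lam)) ≤ (t/(t+dist x y))^((n:ℝ)*lam) := by
    rw [Real.rpow_neg (by norm_num : (0:ℝ) ≤ 2), ← Real.inv_rpow (by norm_num : (0:ℝ) ≤ 2)]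
    exact Real.rpow_le_rpow (by norm_num) hratio (mul_nonneg (by linarith) (by linarith))
  have hderiv := Pt_deriv_le hn hα0 hα1 hσ Q hy ht1.le
  have hBt : B ≤ c₁ * t^(-(n:ℝ)-1) * S := by
    refine mul_le_mul_of_nonneg_right (mul_le_mul_of_nonneg_left ?_ hc₁0.le) hS0
    exact Real.rpow_le_rpow_of_nonpos ht0 ht2 (by linarith)
  have hsq : B^2 ≤ (deriv (fun s => Pt n α (Q.set.indicator σ) y s) t)^2 := by
    nlinarith [hderiv, hBt, hB0]
  have hgrad : B^2 ≤ gradPSq n α (Q.set.indicator σ) y t := by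
    have hsum : 0 ≤ ∑ i : Fin n,
        (deriv (fun s : ℝ =>
          Pt n α (Q.set.indicator σ) (y + s • EuclideanSpace.single i (1 : ℝ)) t) 0) ^ 2 :=
      Finset.sum_nonneg fun i _ => sq_nonneg _
    rw [gradPSq]
    linarith
  have hnum : (2:ℝ)^(-((n:ℝ)*lam)) * B^2
      ≤ (t/(t+dist x y))^((n:ℝ)*lam) * gradPSq n α (Q.set.indicator σ) y t :=
    mul_le_mul hpow hgrad (sq_nonneg B)
      (Real.rpow_nonneg (div_nonneg ht0.le (by positivity)) _)
  have htden : t ^ ((n:ℝ)-1) ≤ m ^ ((n:ℝ)-1) :=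
    Real.rpow_le_rpow ht0.le ht2 (by linarith)
  exact div_le_div₀
    (le_trans (mul_nonneg (Real.rpow_pos_of_pos two_pos _).le (sq_nonneg B)) hnum)
    hnum (Real.rpow_pos_of_pos ht0 _) htden

/-- The two-weight norm inequality for `g_λ^{*,α}` implies the
two-weight `A₂` condition, with `𝒜₂ ≤ C·𝒩` and `C = C(n, α, λ)`. -/
theorem gStar_bound_implies_A2
    (n : ℕ) (hn : 2 ≤ n) (α lam : ℝ) (hlam : 1 < lam) (hα0 : 0 < α) (hα1 : α ≤ 1) :
    ∃ C : ℝ, 0 < C ∧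
      ∀ σ w : E n → ℝ, IsWeight σ → IsWeight w →
        ∀ N : ℝ, 0 ≤ N → OpBound n α lam σ w N →
          A2sq σ w ≤ ENNReal.ofReal ((C * N) ^ 2) := by
  have hn2 : (2:ℝ) ≤ (n:ℝ) := by exact_mod_cast hn
  have hnpos : (0:ℝ) < (n:ℝ) := by linarith
  set c₁ : ℝ := (2:ℝ) ^ (-((n:ℝ)+α)) with hc₁
  have hc₁0 : 0 < c₁ := Real.rpow_pos_of_pos two_pos _
  have h2n0 : (0:ℝ) < 2*(n:ℝ) := by linarith
  set c₂ : ℝ := (2:ℝ)^(-((n:ℝ)*lam)) * (c₁ * (2*(n:ℝ))^(-(n:ℝ)-1))^2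
      / (2*(n:ℝ))^((n:ℝ)-1) * (n:ℝ) with hc₂
  have hpow1 : (0:ℝ) < (2*(n:ℝ))^(-(n:ℝ)-1) := Real.rpow_pos_of_pos h2n0 _
  have hpow2 : (0:ℝ) < (2*(n:ℝ))^((n:ℝ)-1) := Real.rpow_pos_of_pos h2n0 _
  have hpow3 : (0:ℝ) < (2:ℝ)^(-((n:ℝ)*lam)) := Real.rpow_pos_of_pos two_pos _
  have hc₂pos : 0 < c₂ := by
    rw [hc₂]
    exact mul_pos (div_pos (mul_pos hpow3 (pow_pos (mul_pos hc₁0 hpow1) 2)) hpow2) hnpos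
  refine ⟨(Real.sqrt c₂)⁻¹, inv_pos.mpr (Real.sqrt_pos.mpr hc₂pos), ?_⟩
  intro σ w hσ hw N hN hOp
  rw [A2sq]
  refine iSup_le fun Q => ?_
  have hℓ : 0 < Q.side := Q.side_pos
  set ℓ := Q.side with hℓdef
  set S := cInt σ Q with hSdef
  set W := cInt w Q with hWdef
  have hS0 : 0 ≤ S := setIntegral_nonneg (cube_measurableSet Q) fun z _ => hσ.1 z
  have hW0 : 0 ≤ W := setIntegral_nonneg (cube_measurableSet Q) fun z _ => hw.1 z
  have hvol : Q.vol = ℓ^n := rfl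
  rcases eq_or_lt_of_le hS0 with hS | hSpos
  · rw [hvol, ← hS]
    simp
  -- the test function
  set f : E n → ℝ := Q.set.indicator (fun _ => (1:ℝ)) with hf
  have hfm : Measurable f := measurable_const.indicator (cube_measurableSet Q)
  have hgf : (fun z => f z * σ z) = Q.set.indicator σ := by
    funext z; by_cases hz : z ∈ Q.set <;> simp [hf, Set.indicator, hz]
  have hl2 : l2sq σ f = ENNReal.ofReal S := by
    rw [l2sq]
    have hpt : ∀ x : E n, ENNReal.ofReal (f x ^ 2 * σ x)
        = Q.set.indicator (fun x => ENNReal.ofReal (σ x)) x := by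
      intro x; by_cases hx : x ∈ Q.set <;> simp [hf, Set.indicator, hx]
    simp_rw [hpt]
    rw [lintegral_indicator (cube_measurableSet Q)]
    rw [← ofReal_integral_eq_lintegral_ofReal (weight_integrableOn hσ Q)
      (Filter.Eventually.of_forall fun x => hσ.1 x)]
    rfl
  have hfin : l2sq σ f < ⊤ := by rw [hl2]; exact ENNReal.ofReal_lt_top
  have key := hOp f hfm hfin
  rw [hgf, hl2] at key
  -- constants
  set m := 2*(n:ℝ)*ℓ with hm
  have hm0 : 0 < m := by rw [hm]; positivity
  set B := c₁ * m ^ (-(n:ℝ)-1) * S with hB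
  set A := (2:ℝ)^(-((n:ℝ)*lam)) * B^2 / m ^ ((n:ℝ)-1) with hA
  have hA0 : 0 ≤ A := by
    rw [hA]
    exact div_nonneg (mul_nonneg hpow3.le (sq_nonneg _)) (Real.rpow_nonneg hm0.le _)
  have hnl0 : 0 < (n:ℝ)*ℓ := mul_pos hnpos hℓ
  -- lower bound for gStarSq on Q
  have hstepC : ∀ x ∈ Q.set,
      ENNReal.ofReal A * ENNReal.ofReal ((n:ℝ)*ℓ) * ENNReal.ofReal (ℓ^n)
        ≤ gStarSq n α lam (Q.set.indicator σ) x := by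
    intro x hx
    have hinner : ∀ y ∈ Q.set, ENNReal.ofReal A * ENNReal.ofReal ((n:ℝ)*ℓ)
        ≤ ∫⁻ t in Set.Ioi (0:ℝ), ENNReal.ofReal
          ((t / (t + dist x y)) ^ ((n:ℝ)*lam) * gradPSq n α (Q.set.indicator σ) y t
            / t ^ ((n:ℝ)-1)) := by
      intro y hy
      have h1 : Set.Ioc ((n:ℝ)*ℓ) m ⊆ Set.Ioi (0:ℝ) := fun t ht => lt_trans hnl0 ht.1
      refine le_trans ?_ (lintegral_mono_set h1)
      have h2 := setLIntegral_mono' (μ := volume) (f := fun _ => ENNReal.ofReal A)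
        (s := Set.Ioc ((n:ℝ)*ℓ) m) measurableSet_Ioc
        (fun t ht => ENNReal.ofReal_le_ofReal
          (pointwise_lower hn hlam hα0 hα1 hσ Q hx hy ht.1 ht.2))
      refine le_trans (le_of_eq ?_) h2
      rw [setLIntegral_const, Real.volume_Ioc,
        show m - (n:ℝ)*ℓ = (n:ℝ)*ℓ by rw [hm]; ring]
    rw [gStarSq]
    refine le_trans ?_ (setLIntegral_le_lintegral Q.set _)
    refine le_trans (le_of_eq ?_) (setLIntegral_mono' (cube_measurableSet Q) hinner)
    rw [setLIntegral_const, cube_volume Q]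
  -- upper bound via the operator hypothesis
  have hstepD : ENNReal.ofReal A * ENNReal.ofReal ((n:ℝ)*ℓ) * ENNReal.ofReal (ℓ^n)
      * ENNReal.ofReal W ≤ ENNReal.ofReal (N^2) * ENNReal.ofReal S := by
    refine le_trans ?_ key
    have hWof : ENNReal.ofReal W = ∫⁻ x in Q.set, ENNReal.ofReal (w x) :=
      ofReal_integral_eq_lintegral_ofReal (weight_integrableOn hw Q)
        (Filter.Eventually.of_forall fun x => hw.1 x)
    rw [hWof, ← lintegral_const_mul'
      (ENNReal.ofReal A * ENNReal.ofReal ((n:ℝ)*ℓ) * ENNReal.ofReal (ℓ^n)) _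
      (ENNReal.mul_ne_top (ENNReal.mul_ne_top ENNReal.ofReal_ne_top ENNReal.ofReal_ne_top)
        ENNReal.ofReal_ne_top)]
    refine le_trans (setLIntegral_mono' (cube_measurableSet Q) fun x hx => ?_)
      (setLIntegral_le_lintegral _ _)
    exact mul_le_mul_left (hstepC x hx) _
  -- back to the reals
  have hreal : A * ((n:ℝ)*ℓ) * ℓ^n * W ≤ N^2 * S := by
    have h := hstepD
    rw [← ENNReal.ofReal_mul hA0, ← ENNReal.ofReal_mul (mul_nonneg hA0 hnl0.le),
      ← ENNReal.ofReal_mul (mul_nonneg (mul_nonneg hA0 hnl0.le) (pow_nonneg hℓ.le n)),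
      ← ENNReal.ofReal_mul (sq_nonneg N)] at h
    exact (ENNReal.ofReal_le_ofReal_iff (mul_nonneg (sq_nonneg N) hS0)).mp h
  -- algebra: identify A * (n ℓ) ℓⁿ
  have hAeq : A * ((n:ℝ)*ℓ) * ℓ^n = c₂ * S^2 * (ℓ^n * ℓ^n)⁻¹ := by
    have hsplit1 : m ^ (-(n:ℝ)-1) = (2*(n:ℝ)) ^ (-(n:ℝ)-1) * ℓ ^ (-(n:ℝ)-1) := by
      rw [hm, Real.mul_rpow h2n0.le hℓ.le]
    have hsplit2 : m ^ ((n:ℝ)-1) = (2*(n:ℝ)) ^ ((n:ℝ)-1) * ℓ ^ ((n:ℝ)-1) := by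
      rw [hm, Real.mul_rpow h2n0.le hℓ.le]
    have hell := ell_pow_eq hℓ n
    have hlp1 : (0:ℝ) < ℓ ^ (-(n:ℝ)-1) := Real.rpow_pos_of_pos hℓ _
    have hlp2 : (0:ℝ) < ℓ ^ ((n:ℝ)-1) := Real.rpow_pos_of_pos hℓ _
    have hmid : A * ((n:ℝ)*ℓ) * ℓ^n
        = ((2:ℝ)^(-((n:ℝ)*lam)) * (c₁ * (2*(n:ℝ))^(-(n:ℝ)-1))^2 / (2*(n:ℝ))^((n:ℝ)-1))
          * S^2 * ((ℓ ^ (-(n:ℝ)-1)) ^ 2 / ℓ ^ ((n:ℝ)-1) * ((n:ℝ)*ℓ) * ℓ ^ n) := by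
      rw [hA, hB, hsplit1, hsplit2]
      field_simp
    rw [hmid, hell, hc₂]
    ring
  rw [hAeq] at hreal
  -- final arithmetic
  have hP : (0:ℝ) < ℓ^n := pow_pos hℓ n
  have h2 : c₂ * (S*W/(ℓ^n*ℓ^n)) ≤ N^2 := by
    have h1 : (c₂ * (S*W/(ℓ^n*ℓ^n))) * S ≤ N^2 * S := by
      calc (c₂ * (S*W/(ℓ^n*ℓ^n))) * S = c₂ * S^2 * (ℓ^n*ℓ^n)⁻¹ * W := by
            field_simp
        _ ≤ N^2 * S := hreal
    exact le_of_mul_le_mul_right h1 hSpos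
  rw [hvol]
  refine ENNReal.ofReal_le_ofReal ?_
  have hCN : ((Real.sqrt c₂)⁻¹ * N)^2 = N^2 / c₂ := by
    rw [mul_pow, inv_pow, Real.sq_sqrt hc₂pos.le]
    ring
  rw [hCN]
  calc S/ℓ^n*(W/ℓ^n) = S*W/(ℓ^n*ℓ^n) := by ring
    _ ≤ N^2/c₂ := by
        rw [le_div_iff₀ hc₂pos]
        linarith [h2]
end
end

section
/- Fix an integer r ≥ 1 and γ ∈ (0, 1/2). Let I, J be dyadic cubes in ℝⁿ such that J is good, J ⊂ I and 2^r ℓ(J) ≤ ℓ(I). Then there exists a cube K ∈ 𝒲_I with J ⊂ K. -/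
open MeasureTheory Set
open scoped ENNReal NNReal BigOperators

noncomputable section

/-- If `A.set ⊆ B.set`, then in each coordinate the defining interval of `A` is
contained in that of `B`. -/
lemma cube_subset_coord {n : ℕ} {A B : Cube n} (h : A.set ⊆ B.set) (i : Fin n) :
    B.corner i ≤ A.corner i ∧ A.corner i + A.side ≤ B.corner i + B.side := by
  classical
  have hIco : Set.Ico (A.corner i) (A.corner i + A.side) ⊆
      Set.Ico (B.corner i) (B.corner i + B.side) := by
    intro y hy
    set x : E n := WithLp.toLp 2 (fun j => if j = i then y else A.corner j) with hx
    have hxA : x ∈ A.set := by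
      intro j
      by_cases hj : j = i
      · subst hj
        simpa [hx] using hy
      · have := A.side_pos
        simp only [hx, PiLp.toLp_apply, hj, if_false]
        exact ⟨le_refl _, by linarith⟩
    have hxB := h hxA i
    simpa [hx] using hxB
  exact (Set.Ico_subset_Ico_iff (by linarith [A.side_pos])).mp hIco

/-- If `J` is a good dyadic cube with `J ⊂ I` and `2^r ℓ(J) ≤ ℓ(I)`,
then `J` is contained in some cube `K` of the Whitney family `𝒲_I`. -/
theorem good_cube_in_whitney
    (n r : ℕ) (hr : 1 ≤ r) (γ : ℝ) (hγ0 : 0 < γ) (hγ1 : γ < 1 / 2)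
    (I J : Cube n) (hI : I.IsDyadic) (hJ : J.IsDyadic)
    (hgood : IsGood n r γ J) (hsub : J.set ⊆ I.set) (hside : 2 ^ r * J.side ≤ I.side) :
    ∃ K : Cube n, InWhitney n r γ I K ∧ J.set ⊆ K.set := by
  -- `J` itself satisfies the Whitney predicate, by goodness.
  have h1 : J.side ^ γ * I.side ^ (1 - γ) ≤ sdist J.set (frontier I.set) := by
    by_contra h
    exact hgood ⟨I, hI, hside, le_of_not_ge h⟩
  have hWJ : WhitneyPred n r γ I J := ⟨hJ, hsub, hside, h1⟩
  obtain ⟨kI, mI, hkI, hmI⟩ := hI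
  set P : ℤ → Prop :=
    fun k => ∃ K : Cube n, K.side = 2 ^ k ∧ WhitneyPred n r γ I K ∧ J.set ⊆ K.set with hP
  obtain ⟨kJ, mJ, hkJ, hmJ⟩ := hJ
  have hinh : ∃ k, P k := ⟨kJ, J, hkJ, hWJ, subset_rfl⟩
  have hbdd : ∃ b : ℤ, ∀ k : ℤ, P k → k ≤ b := by
    refine ⟨kI - r, ?_⟩
    rintro k ⟨K, hKs, hKW, -⟩
    have h2 : (2 : ℝ) ^ (k + (r : ℤ)) ≤ 2 ^ kI := by
      have h3 := hKW.2.2.1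
      rw [hKs, hkI] at h3
      calc (2 : ℝ) ^ (k + (r : ℤ)) = 2 ^ r * 2 ^ k := by
            rw [zpow_add₀ (two_ne_zero), zpow_natCast, mul_comm]
        _ ≤ 2 ^ kI := h3
    have h4 : k + (r : ℤ) ≤ kI := (zpow_le_zpow_iff_right₀ (one_lt_two (α := ℝ))).mp h2
    omega
  obtain ⟨k, ⟨K, hKs, hKW, hJK⟩, hmax⟩ := Int.exists_greatest_of_bdd hbdd hinh
  refine ⟨K, ⟨hKW, ?_⟩, hJK⟩
  intro K' hK' hKK'
  rcases Nat.eq_zero_or_pos n with hn | hn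
  · subst hn
    have huniv : ∀ Q : Cube 0, Q.set = Set.univ := by
      intro Q
      ext x
      simp [Cube.set]
    rw [huniv, huniv]
  · obtain ⟨k', m', hk's, hm'⟩ := hK'.1
    have hco := fun i => cube_subset_coord hKK' i
    have i0 : Fin n := ⟨0, hn⟩
    have hsle : K.side ≤ K'.side := by
      have h5 := (hco i0).1
      have h6 := (hco i0).2
      linarith
    have hk'le : k' ≤ k := hmax k' ⟨K', hk's, hK', hJK.trans hKK'⟩
    have hkk' : k ≤ k' := by
      refine (zpow_le_zpow_iff_right₀ (one_lt_two (α := ℝ))).mp ?_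
      rw [← hKs, ← hk's]
      exact hsle
    have hkeq : k' = k := le_antisymm hk'le hkk'
    have hside_eq : K'.side = K.side := by rw [hk's, hKs, hkeq]
    have hcorner : ∀ i, K'.corner i = K.corner i := by
      intro i
      have h5 := (hco i).1
      have h6 := (hco i).2
      rw [hside_eq] at h6
      linarith
    ext x
    simp only [Cube.set, Set.mem_setOf_eq, hside_eq, hcorner]
end
end

section
/- For every C > 0 and every γ ∈ (0, 1/2) there exist an integer r₀ and a constant C' (depending only on C, γ and n) such that for every integer r ≥ r₀ and every dyadic cube I ⊂ ℝⁿ, one has Σ_{K ∈ 𝒲_I} 1_{CK}(x) ≤ C' 1_I(x) for all x ∈ ℝⁿ, where CK denotes the cube concentric with K with side length C ℓ(K). -/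
open MeasureTheory Set
open scoped ENNReal NNReal BigOperators

noncomputable section

namespace WhitneyOverlapAux

variable {n : ℕ}

lemma cube_eq_of {K K' : Cube n} (hc : K.corner = K'.corner) (hs : K.side = K'.side) :
    K = K' := by
  cases K; cases K'; simp_all

lemma mem_set_iff {Q : Cube n} {x : E n} :
    x ∈ Q.set ↔ ∀ i, Q.corner i ≤ x i ∧ x i < Q.corner i + Q.side := Iff.rfl

lemma mem_dilate_iff {Q : Cube n} {x : E n} {c : ℝ} :
    x ∈ Q.dilate c ↔ ∀ i, Q.corner i + Q.side / 2 - c * Q.side / 2 ≤ x i ∧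
      x i < Q.corner i + Q.side / 2 + c * Q.side / 2 := Iff.rfl

lemma corner_mem (Q : Cube n) : Q.corner ∈ Q.set :=
  mem_set_iff.mpr fun i => ⟨le_refl _, by linarith [Q.side_pos]⟩

/-- Center of a cube. -/
def ctr (Q : Cube n) : E n := WithLp.toLp 2 (fun i => Q.corner i + Q.side / 2)

lemma ctr_apply (Q : Cube n) (i : Fin n) : ctr Q i = Q.corner i + Q.side / 2 := rfl

lemma ctr_mem (Q : Cube n) : ctr Q ∈ Q.set :=
  mem_set_iff.mpr fun i => by
    rw [ctr_apply]; constructor <;> linarith [Q.side_pos]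

lemma coord_le_dist (x y : E n) (i : Fin n) : |x i - y i| ≤ dist x y := by
  rw [EuclideanSpace.dist_eq, ← Real.sqrt_sq_eq_abs]
  refine Real.sqrt_le_sqrt ?_
  have h := Finset.single_le_sum (f := fun j => dist (x j) (y j) ^ 2)
    (fun j _ => sq_nonneg _) (Finset.mem_univ i)
  simpa [Real.dist_eq, sq_abs] using h

lemma dist_le_of_coord {x y : E n} {b : ℝ} (hb : 0 ≤ b) (h : ∀ i, |x i - y i| ≤ b) :
    dist x y ≤ Real.sqrt n * b := by
  rw [EuclideanSpace.dist_eq]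
  have h1 : ∑ i, dist (x i) (y i) ^ 2 ≤ (n : ℝ) * b ^ 2 := by
    calc ∑ i, dist (x i) (y i) ^ 2 ≤ ∑ _i : Fin n, b ^ 2 := by
          refine Finset.sum_le_sum fun i _ => ?_
          rw [Real.dist_eq]
          have h0 := abs_nonneg (x i - y i)
          nlinarith [h i]
      _ = (n : ℝ) * b ^ 2 := by
          simp [Finset.sum_const, Finset.card_univ]
  calc Real.sqrt (∑ i, dist (x i) (y i) ^ 2) ≤ Real.sqrt ((n : ℝ) * b ^ 2) :=
        Real.sqrt_le_sqrt h1
    _ = Real.sqrt n * b := by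
        rw [Real.sqrt_mul (by positivity), Real.sqrt_sq hb]

lemma sdist_le {A B : Set (E n)} {a b : E n} (ha : a ∈ A) (hb : b ∈ B) :
    sdist A B ≤ dist a b := by
  apply csInf_le
  · refine ⟨0, fun d hd => ?_⟩
    obtain ⟨u, -, v, -, rfl⟩ := hd
    exact dist_nonneg
  · exact Set.mem_image2_of_mem ha hb

lemma exists_of_sdist_lt {A B : Set (E n)} (hA : A.Nonempty) (hB : B.Nonempty) {c : ℝ}
    (h : sdist A B < c) : ∃ a ∈ A, ∃ b ∈ B, dist a b < c := by
  by_contra hcon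
  push_neg at hcon
  have hle : c ≤ sdist A B := by
    refine le_csInf (hA.image2 hB) ?_
    rintro d ⟨u, hu, v, hv, rfl⟩
    exact hcon u hu v hv
  linarith

lemma exists_frontier_dist {s : Set (E n)} {y x : E n} (hy : y ∈ s) (hx : x ∉ s) :
    ∃ z ∈ frontier s, dist y z ≤ dist y x := by
  have key : (segment ℝ y x ∩ frontier s).Nonempty := by
    by_contra hcon
    rw [Set.not_nonempty_iff_eq_empty] at hcon
    have hdisj : ∀ z ∈ segment ℝ y x, z ∉ frontier s := fun z hz hzf =>
      Set.eq_empty_iff_forall_notMem.mp hcon z ⟨hz, hzf⟩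
    have hpre := (convex_segment y x).isPreconnected
    have hres := hpre (interior s) (closure s)ᶜ isOpen_interior
      isClosed_closure.isOpen_compl ?_ ?_ ?_
    · obtain ⟨z, -, hz1, hz2⟩ := hres
      exact hz2 (interior_subset_closure hz1)
    · intro z hz
      by_cases hzc : z ∈ closure s
      · exact Or.inl (by_contra fun hzi => hdisj z hz ⟨hzc, hzi⟩)
      · exact Or.inr hzc
    · exact ⟨y, left_mem_segment ℝ y x,
        by_contra fun hyi => hdisj y (left_mem_segment ℝ y x) ⟨subset_closure hy, hyi⟩⟩
    · exact ⟨x, right_mem_segment ℝ y x,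
        fun hxc => hdisj x (right_mem_segment ℝ y x)
          ⟨hxc, fun hxi => hx (interior_subset hxi)⟩⟩
  obtain ⟨z, hzseg, hzf⟩ := key
  refine ⟨z, hzf, ?_⟩
  have h := dist_add_dist_of_mem_segment hzseg
  have h0 : (0:ℝ) ≤ dist z x := dist_nonneg
  linarith

end WhitneyOverlapAux
namespace WhitneyOverlapAux

variable {n : ℕ}

lemma dyadic_repr {Q : Cube n} (h : Q.IsDyadic) :
    Q.side = (2:ℝ) ^ (Int.log 2 Q.side) ∧
      ∀ i, Q.corner i = Q.side * (⌊Q.corner i / Q.side⌋ : ℤ) := by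
  obtain ⟨k, m, hs, hc⟩ := h
  have h2 : ((2:ℕ):ℝ) = (2:ℝ) := by norm_num
  have hlog : Int.log 2 Q.side = k := by
    rw [hs, ← h2, Int.log_zpow (by norm_num)]
  have hside : Q.side ≠ 0 := ne_of_gt Q.side_pos
  refine ⟨by rw [hlog, ← hs], fun i => ?_⟩
  have hdiv : Q.corner i / Q.side = (m i : ℝ) := by
    rw [hc i, ← hs, mul_comm, mul_div_assoc, div_self hside, mul_one]
  rw [hdiv, Int.floor_intCast, hc i, ← hs, mul_comm]

lemma dyadic_nested {P I : Cube n} (hP : P.IsDyadic) (hI : I.IsDyadic)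
    (hside : P.side ≤ I.side) (hne : (P.set ∩ I.set).Nonempty) : P.set ⊆ I.set := by
  obtain ⟨p, a, hps, hpc⟩ := hP
  obtain ⟨q, b, hqs, hqc⟩ := hI
  obtain ⟨x0, hx0P, hx0I⟩ := hne
  have hpq : p ≤ q := by
    rw [hps, hqs] at hside
    exact (zpow_le_zpow_iff_right₀ one_lt_two).mp hside
  have hpow : (0:ℝ) < (2:ℝ) ^ p := zpow_pos (by norm_num) p
  set t : ℤ := 2 ^ (q - p).toNat with ht
  have htr : (t : ℝ) = (2:ℝ) ^ (q - p) := by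
    rw [ht]
    push_cast
    rw [← zpow_natCast (2:ℝ), Int.toNat_of_nonneg (by omega)]
  have hqp : (2:ℝ) ^ q = (2:ℝ) ^ p * (t : ℝ) := by
    rw [htr, ← zpow_add₀ (two_ne_zero : (2:ℝ) ≠ 0)]
    congr 1
    ring
  intro y hy
  rw [mem_set_iff] at hy ⊢
  intro i
  obtain ⟨hy1, hy2⟩ := hy i
  obtain ⟨hP1, hP2⟩ := hx0P i
  obtain ⟨hI1, hI2⟩ := hx0I i
  rw [hpc i] at hy1 hy2 hP1 hP2
  rw [hps] at hy2 hP2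
  rw [hqc i] at hI1 hI2
  rw [hqs] at hI2
  rw [hqc i, hqs, hqp]
  rw [hqp] at hI1 hI2
  have k1 : t * b i ≤ a i := by
    have hr1 : (2:ℝ) ^ p * ((t : ℝ) * (b i : ℝ)) < (2:ℝ) ^ p * ((a i : ℝ) + 1) := by
      nlinarith [hI1, hP2]
    have hr2 : (t : ℝ) * (b i : ℝ) < (a i : ℝ) + 1 := lt_of_mul_lt_mul_left hr1 hpow.le
    have : (t * b i : ℤ) < a i + 1 := by exact_mod_cast hr2
    omega
  have k2 : a i + 1 ≤ t * (b i + 1) := by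
    have hr1 : (2:ℝ) ^ p * ((a i : ℝ)) < (2:ℝ) ^ p * ((t : ℝ) * ((b i : ℝ) + 1)) := by
      nlinarith [hP1, hI2]
    have hr2 : (a i : ℝ) < (t : ℝ) * ((b i : ℝ) + 1) := lt_of_mul_lt_mul_left hr1 hpow.le
    have : (a i : ℤ) < t * (b i + 1) := by exact_mod_cast hr2
    omega
  have k1r : (t : ℝ) * (b i : ℝ) ≤ (a i : ℝ) := by exact_mod_cast k1
  have k2r : (a i : ℝ) + 1 ≤ (t : ℝ) * ((b i : ℝ) + 1) := by exact_mod_cast k2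
  have m1 := mul_le_mul_of_nonneg_left k1r hpow.le
  have m2 := mul_le_mul_of_nonneg_left k2r hpow.le
  constructor
  · linarith [hy1, m1]
  · linarith [hy2, m2]

lemma exists_parent (hn : 0 < n) {K : Cube n} (hK : K.IsDyadic) :
    ∃ P : Cube n, P.IsDyadic ∧ P.side = 2 * K.side ∧ K.set ⊆ P.set ∧ ¬ P.set ⊆ K.set := by
  obtain ⟨k, m, hs, hc⟩ := hK
  have hsp : (0:ℝ) < (2:ℝ) ^ k := zpow_pos (by norm_num) k
  have e1 : (2:ℝ) ^ (k + 1) = 2 * (2:ℝ) ^ k := by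
    rw [zpow_add₀ (two_ne_zero : (2:ℝ) ≠ 0)]
    ring
  set P : Cube n := ⟨WithLp.toLp 2 (fun i => (2:ℝ) ^ (k+1) * ((m i / 2 : ℤ) : ℝ) : Fin n → ℝ),
    (2:ℝ) ^ (k+1), zpow_pos (by norm_num) _⟩ with hPdef
  have hPc : ∀ i, P.corner i = (2:ℝ) ^ (k+1) * ((m i / 2 : ℤ) : ℝ) := fun i => rfl
  have hPs : P.side = (2:ℝ) ^ (k+1) := rfl
  have hmv : ∀ i : Fin n, (m i : ℝ) = 2 * ((m i / 2 : ℤ) : ℝ) + ((m i % 2 : ℤ) : ℝ) := by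
    intro i
    exact_mod_cast congrArg (fun z : ℤ => (z : ℝ)) (Int.mul_ediv_add_emod (m i) 2).symm
  have hsub : K.set ⊆ P.set := by
    intro y hy
    rw [mem_set_iff] at hy ⊢
    intro i
    obtain ⟨h1, h2⟩ := hy i
    rw [hc i] at h1 h2
    rw [hs] at h2
    rw [hPc i, hPs]
    have hm := hmv i
    rw [e1]
    rcases Int.emod_two_eq_zero_or_one (m i) with hv | hv <;> rw [hv] at hm <;>
      push_cast at hm <;> rw [hm] at h1 h2 <;> constructor <;> linarith [hsp]
  refine ⟨P, ⟨k+1, fun i => m i / 2, hPs, hPc⟩, by rw [hPs, hs, e1], hsub, ?_⟩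
  intro habs
  set i0 : Fin n := ⟨0, hn⟩ with hi0
  set w : E n := WithLp.toLp 2 <| Function.update (K.corner.ofLp) i0
    ((2:ℝ) ^ (k+1) * ((m i0 / 2 : ℤ) : ℝ) +
      (if m i0 % 2 = 0 then 3 * (2:ℝ)^k / 2 else (2:ℝ)^k / 2)) with hw
  have hwi0 : w i0 = (2:ℝ) ^ (k+1) * ((m i0 / 2 : ℤ) : ℝ) +
      (if m i0 % 2 = 0 then 3 * (2:ℝ)^k / 2 else (2:ℝ)^k / 2) := by
    rw [hw, WithLp.ofLp_toLp, Function.update_self]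
  have hwP : w ∈ P.set := by
    rw [mem_set_iff]
    intro i
    by_cases hi : i = i0
    · rw [hi, hwi0, hPc i0, hPs]
      rw [e1]
      rcases Int.emod_two_eq_zero_or_one (m i0) with hv | hv
      · rw [if_pos hv]
        constructor <;> linarith [hsp]
      · rw [if_neg (by omega : ¬ m i0 % 2 = 0)]
        constructor <;> linarith [hsp]
    · simp only [hw, WithLp.ofLp_toLp, Function.update_of_ne hi]
      exact (mem_set_iff.mp (hsub (corner_mem K))) i
  obtain ⟨hk1, hk2⟩ := mem_set_iff.mp (habs hwP) i0
  rw [hwi0, hc i0] at hk1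
  rw [hwi0, hc i0, hs] at hk2
  have hm := hmv i0
  rcases Int.emod_two_eq_zero_or_one (m i0) with hv | hv
  · rw [hv] at hm
    push_cast at hm
    rw [if_pos hv] at hk2
    rw [hm, e1] at hk2
    linarith [hsp]
  · rw [hv] at hm
    push_cast at hm
    rw [if_neg (by omega : ¬ m i0 % 2 = 0)] at hk1
    rw [hm, e1] at hk1
    linarith [hsp]

end WhitneyOverlapAux
namespace WhitneyOverlapAux

variable {n : ℕ}

lemma size_ineq {r : ℕ} {γ : ℝ} (hγ1 : γ < 1/2) {sK sI Cn : ℝ}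
    (hsK : 0 < sK) (hsI : 0 < sI) (hCn : 0 ≤ Cn)
    (h1 : (2:ℝ)^r * sK ≤ sI) (hr : Cn ≤ ((2:ℝ)^r) ^ (1-γ)) :
    Cn * sK ≤ sK ^ γ * sI ^ (1-γ) := by
  have h1γ : (0:ℝ) < 1 - γ := by linarith
  have hp : (0:ℝ) < (2:ℝ)^r := by positivity
  have e2 : ((2:ℝ)^r * sK) ^ (1-γ) = ((2:ℝ)^r) ^ (1-γ) * sK ^ (1-γ) :=
    Real.mul_rpow hp.le hsK.le
  have e3 : sK ^ γ * sK ^ (1-γ) = sK := by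
    rw [← Real.rpow_add hsK]
    norm_num
  have e4 : ((2:ℝ)^r * sK) ^ (1-γ) ≤ sI ^ (1-γ) :=
    Real.rpow_le_rpow (by positivity) h1 h1γ.le
  calc Cn * sK = Cn * (sK ^ γ * sK ^ (1-γ)) := by rw [e3]
    _ ≤ ((2:ℝ)^r) ^ (1-γ) * (sK ^ γ * sK ^ (1-γ)) := by
        have : (0:ℝ) ≤ sK ^ γ * sK ^ (1-γ) := by positivity
        exact mul_le_mul_of_nonneg_right hr this
    _ = sK ^ γ * (((2:ℝ)^r * sK) ^ (1-γ)) := by rw [e2]; ring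
    _ ≤ sK ^ γ * sI ^ (1-γ) := by
        have : (0:ℝ) ≤ sK ^ γ := by positivity
        exact mul_le_mul_of_nonneg_left e4 this

lemma one_le_pow_rpow {r : ℕ} {γ : ℝ} (hγ1 : γ < 1/2) :
    (1:ℝ) ≤ ((2:ℝ)^r) ^ (1-γ) := by
  have h1 : (1:ℝ) ≤ (2:ℝ)^r := by
    calc (1:ℝ) = 1^r := (one_pow r).symm
      _ ≤ 2^r := pow_le_pow_left₀ zero_le_one one_le_two r
  calc (1:ℝ) = (1:ℝ) ^ (1-γ) := (Real.one_rpow _).symm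
    _ ≤ ((2:ℝ)^r) ^ (1-γ) := Real.rpow_le_rpow zero_le_one h1 (by linarith)

lemma dist_ctr_of_dilate {Q : Cube n} {x : E n} {c : ℝ} (hc : 0 ≤ c) (hx : x ∈ Q.dilate c) :
    dist x (ctr Q) ≤ Real.sqrt n * (c * Q.side / 2) := by
  refine dist_le_of_coord (div_nonneg (mul_nonneg hc Q.side_pos.le) (by norm_num)) fun i => ?_
  obtain ⟨h1, h2⟩ := mem_dilate_iff.mp hx i
  rw [ctr_apply, abs_le]
  constructor <;> linarith

lemma lower_frontier {r : ℕ} {γ c : ℝ} (hγ1 : γ < 1/2) (hc : 0 < c)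
    {I K' : Cube n} (hK' : WhitneyPred n r γ I K') {x : E n} (hx : x ∈ K'.dilate c)
    (hr : Real.sqrt n * c ≤ ((2:ℝ)^r) ^ (1-γ)) :
    ∀ z ∈ frontier I.set, K'.side ^ γ * I.side ^ (1-γ) / 2 ≤ dist x z := by
  obtain ⟨hdy, hsub, hsize, hdist⟩ := hK'
  intro z hz
  have h1 : sdist K'.set (frontier I.set) ≤ dist (ctr K') z := sdist_le (ctr_mem K') hz
  have h2 : dist x (ctr K') ≤ Real.sqrt n * (c * K'.side / 2) := dist_ctr_of_dilate hc.le hx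
  have h3 : Real.sqrt n * c * K'.side ≤ K'.side ^ γ * I.side ^ (1-γ) :=
    size_ineq hγ1 K'.side_pos I.side_pos (mul_nonneg (Real.sqrt_nonneg _) hc.le) hsize hr
  have h4 := dist_triangle (ctr K') x z
  have h5 : dist (ctr K') x = dist x (ctr K') := dist_comm _ _
  have e : Real.sqrt n * (c * K'.side / 2) = Real.sqrt n * c * K'.side / 2 := by ring
  linarith

lemma mem_I_of_dilate (hn : 0 < n) {r : ℕ} {γ c : ℝ} (hγ1 : γ < 1/2) (hc : 0 < c)
    {I K' : Cube n} (hK' : WhitneyPred n r γ I K') {x : E n} (hx : x ∈ K'.dilate c)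
    (hr : Real.sqrt n * c ≤ ((2:ℝ)^r) ^ (1-γ)) :
    x ∈ I.set := by
  obtain ⟨hdy, hsub, hsize, hdist⟩ := hK'
  by_contra hxI
  obtain ⟨z, hzf, hzd⟩ := exists_frontier_dist (hsub (ctr_mem K')) hxI
  have h1 : sdist K'.set (frontier I.set) ≤ dist (ctr K') z := sdist_le (ctr_mem K') hzf
  have h2 : dist (ctr K') x ≤ Real.sqrt n * (c * K'.side / 2) := by
    rw [dist_comm]
    exact dist_ctr_of_dilate hc.le hx
  have h3 : Real.sqrt n * c * K'.side ≤ K'.side ^ γ * I.side ^ (1-γ) :=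
    size_ineq hγ1 K'.side_pos I.side_pos (mul_nonneg (Real.sqrt_nonneg _) hc.le) hsize hr
  have hpos : 0 < Real.sqrt n * c * K'.side := by
    have hn1 : (0:ℝ) < Real.sqrt n := Real.sqrt_pos.mpr (by exact_mod_cast hn)
    exact mul_pos (mul_pos hn1 hc) K'.side_pos
  linarith

/-- The comparability constant for Whitney cubes. -/
def lam (n : ℕ) (c γ : ℝ) : ℝ :=
  max 2 ((2 * (Real.sqrt n * c / 2 + 2 * Real.sqrt n + 2)) ^ (γ⁻¹))

lemma two_le_lam (n : ℕ) (c γ : ℝ) : (2:ℝ) ≤ lam n c γ := le_max_left _ _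

lemma ratio (hn : 0 < n) {r : ℕ} {γ c : ℝ} (hγ0 : 0 < γ) (hγ1 : γ < 1/2) (hc : 0 < c)
    {I K K' : Cube n} (hI : I.IsDyadic)
    (hK : InWhitney n r γ I K) (hK' : WhitneyPred n r γ I K') {x : E n}
    (hxK : x ∈ K.dilate c) (hxK' : x ∈ K'.dilate c)
    (hr : Real.sqrt n * c ≤ ((2:ℝ)^r) ^ (1-γ)) :
    K'.side ≤ lam n c γ * K.side := by
  set c2 : ℝ := Real.sqrt n * c / 2 + 2 * Real.sqrt n + 2 with hc2def
  have hsqn : (0:ℝ) ≤ Real.sqrt n := Real.sqrt_nonneg _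
  have hc2 : (0:ℝ) < c2 := by
    rw [hc2def]
    nlinarith [hsqn, hc]
  obtain ⟨hpred, hmax⟩ := hK
  obtain ⟨hdy, hsub, hsize, hdist⟩ := hpred
  by_cases hcase : (2:ℝ)^(r+1) * K.side ≤ I.side
  · -- the parent of K must fail the distance condition
    obtain ⟨P, hPdy, hPside, hKP, hPK⟩ := exists_parent hn hdy
    have hPsideI : P.side ≤ I.side := by
      rw [hPside]
      calc 2 * K.side ≤ 2^(r+1) * K.side := by
            have h2 : (2:ℝ) ≤ 2^(r+1) := by
              calc (2:ℝ) = 2^1 := (pow_one 2).symm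
                _ ≤ 2^(r+1) := pow_le_pow_right₀ one_le_two (by omega)
            nlinarith [K.side_pos]
        _ ≤ I.side := hcase
    have hPsub : P.set ⊆ I.set :=
      dyadic_nested hPdy hI hPsideI
        ⟨K.corner, hKP (corner_mem K), hsub (corner_mem K)⟩
    have hPnotpred : ¬ WhitneyPred n r γ I P := by
      intro hp
      exact hPK ((hmax P hp hKP).le)
    have hPsize : (2:ℝ)^r * P.side ≤ I.side := by
      rw [hPside]
      calc (2:ℝ)^r * (2 * K.side) = 2^(r+1) * K.side := by ring
        _ ≤ I.side := hcase
    have hPdist : sdist P.set (frontier I.set) < P.side ^ γ * I.side ^ (1-γ) := by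
      by_contra hcon
      push_neg at hcon
      exact hPnotpred ⟨hPdy, hPsub, hPsize, hcon⟩
    -- frontier of I is nonempty
    have hFne : (frontier I.set).Nonempty := by
      set i0 : Fin n := ⟨0, hn⟩
      set w : E n := WithLp.toLp 2 (Function.update I.corner.ofLp i0 (I.corner i0 - 1)) with hwdef
      have hwI : w ∉ I.set := by
        intro hcon
        have h := (mem_set_iff.mp hcon) i0
        simp only [hwdef, WithLp.ofLp_toLp, Function.update_self] at h
        linarith [h.1]
      obtain ⟨z, hz, -⟩ := exists_frontier_dist (corner_mem I) hwI
      exact ⟨z, hz⟩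
    obtain ⟨y', hy', z, hzf, hdyz⟩ :=
      exists_of_sdist_lt ⟨P.corner, corner_mem P⟩ hFne hPdist
    -- collect distance estimates
    have e1 : dist x (ctr K) ≤ Real.sqrt n * (c * K.side / 2) :=
      dist_ctr_of_dilate hc.le hxK
    have e2 : dist (ctr K) y' ≤ Real.sqrt n * (2 * K.side) := by
      refine dist_le_of_coord (mul_nonneg (by norm_num) K.side_pos.le) fun i => ?_
      obtain ⟨a1, a2⟩ := mem_set_iff.mp (hKP (ctr_mem K)) i
      obtain ⟨b1, b2⟩ := mem_set_iff.mp hy' i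
      rw [hPside] at a2 b2
      rw [abs_le]
      constructor <;> linarith
    have e3 : dist x z ≤ dist x (ctr K) + dist (ctr K) y' + dist y' z :=
      dist_triangle4 x (ctr K) y' z
    -- bound (2s)^γ by 2 s^γ
    have e4 : P.side ^ γ * I.side ^ (1-γ) ≤ 2 * (K.side ^ γ * I.side ^ (1-γ)) := by
      rw [hPside, Real.mul_rpow (by norm_num) K.side_pos.le]
      have h2γ : (2:ℝ) ^ γ ≤ 2 := by
        calc (2:ℝ) ^ γ ≤ (2:ℝ) ^ (1:ℝ) :=
              Real.rpow_le_rpow_of_exponent_le one_le_two (by linarith)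
          _ = 2 := Real.rpow_one 2
      have hnn2 : (0:ℝ) ≤ K.side ^ γ := Real.rpow_nonneg K.side_pos.le γ
      have hnn3 : (0:ℝ) ≤ I.side ^ (1-γ) := Real.rpow_nonneg I.side_pos.le _
      have h := mul_le_mul_of_nonneg_right h2γ (mul_nonneg hnn2 hnn3)
      nlinarith [h]
    have e5 : K.side ≤ K.side ^ γ * I.side ^ (1-γ) := by
      have := size_ineq hγ1 K.side_pos I.side_pos zero_le_one hsize (one_le_pow_rpow hγ1)
      linarith
    have key : dist x z < c2 * (K.side ^ γ * I.side ^ (1-γ)) := by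
      have t1 : Real.sqrt n * (c * K.side / 2) ≤
          Real.sqrt n * c / 2 * (K.side ^ γ * I.side ^ (1-γ)) := by
        have h := mul_le_mul_of_nonneg_left e5
          (div_nonneg (mul_nonneg hsqn hc.le) (by norm_num) : (0:ℝ) ≤ Real.sqrt n * c / 2)
        linarith
      have t2 : Real.sqrt n * (2 * K.side) ≤
          2 * Real.sqrt n * (K.side ^ γ * I.side ^ (1-γ)) := by
        have h := mul_le_mul_of_nonneg_left e5
          (mul_nonneg (by norm_num) hsqn : (0:ℝ) ≤ 2 * Real.sqrt n)
        linarith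
      rw [hc2def]
      linarith [e1, e2, e3, hdyz, e4, t1, t2]
    -- lower bound for K'
    have hl := lower_frontier hγ1 hc hK' hxK' hr z hzf
    have hLI : (0:ℝ) < I.side ^ (1-γ) := Real.rpow_pos_of_pos I.side_pos _
    have hcomp : K'.side ^ γ ≤ 2 * c2 * K.side ^ γ := by
      have h6 : K'.side ^ γ * I.side ^ (1-γ) ≤ 2 * c2 * (K.side ^ γ * I.side ^ (1-γ)) := by
        linarith
      have h7 : K'.side ^ γ * I.side ^ (1-γ) ≤ (2 * c2 * K.side ^ γ) * I.side ^ (1-γ) := by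
        linarith
      exact (mul_le_mul_iff_left₀ hLI).mp h7
    -- take γ⁻¹ powers
    have hγne : γ ≠ 0 := ne_of_gt hγ0
    calc K'.side = (K'.side ^ γ) ^ (γ⁻¹) := by
          rw [← Real.rpow_mul K'.side_pos.le, mul_inv_cancel₀ hγne, Real.rpow_one]
      _ ≤ (2 * c2 * K.side ^ γ) ^ (γ⁻¹) :=
          Real.rpow_le_rpow (Real.rpow_nonneg K'.side_pos.le γ) hcomp
            (inv_nonneg.mpr hγ0.le)
      _ = (2 * c2) ^ (γ⁻¹) * (K.side ^ γ) ^ (γ⁻¹) :=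
          Real.mul_rpow (by linarith) (Real.rpow_nonneg K.side_pos.le γ)
      _ = (2 * c2) ^ (γ⁻¹) * K.side := by
          rw [← Real.rpow_mul K.side_pos.le, mul_inv_cancel₀ hγne, Real.rpow_one]
      _ ≤ lam n c γ * K.side := by
          refine mul_le_mul_of_nonneg_right ?_ K.side_pos.le
          exact le_max_right _ _
  · -- K is large: K.side > 2^{-(r+1)} I.side, while K'.side ≤ 2^{-r} I.side
    push_neg at hcase
    obtain ⟨-, -, hsize', -⟩ := hK'
    have h1 : (2:ℝ)^r * K'.side < 2^r * (2 * K.side) := by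
      calc (2:ℝ)^r * K'.side ≤ I.side := hsize'
        _ < 2^(r+1) * K.side := hcase
        _ = 2^r * (2 * K.side) := by ring
    have h2 : K'.side < 2 * K.side := lt_of_mul_lt_mul_left h1 (by positivity)
    calc K'.side ≤ 2 * K.side := h2.le
      _ ≤ lam n c γ * K.side := mul_le_mul_of_nonneg_right (two_le_lam n c γ) K.side_pos.le

end WhitneyOverlapAux
/-- Bounded overlap of the dilates of the Whitney cubes: for every
`C > 0` and `γ ∈ (0, 1/2)` there are `r₀` and `C'` such that for every `r ≥ r₀` and
every dyadic cube `I`, `Σ_{K ∈ 𝒲_I} 1_{CK} ≤ C' 1_I` pointwise. -/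
theorem whitney_dilates_bounded_overlap
    (n : ℕ) (C : ℝ) (hC : 0 < C) (γ : ℝ) (hγ0 : 0 < γ) (hγ1 : γ < 1 / 2) :
    ∃ r₀ : ℕ, ∃ C' : ℝ≥0, ∀ r : ℕ, r₀ ≤ r → ∀ I : Cube n, I.IsDyadic → ∀ x : E n,
      (∑' K : {K : Cube n // InWhitney n r γ I K},
          (K.1.dilate C).indicator (fun _ => (1 : ℝ≥0∞)) x)
        ≤ (C' : ℝ≥0∞) * I.set.indicator (fun _ => (1 : ℝ≥0∞)) x := by
  classical
  open WhitneyOverlapAux in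
  obtain ⟨a, ha⟩ := pow_unbounded_of_one_lt (WhitneyOverlapAux.lam n C γ)
    (one_lt_two : (1:ℝ) < 2)
  obtain ⟨r₀, hr₀⟩ := pow_unbounded_of_one_lt ((Real.sqrt n * C)^2)
    (one_lt_two : (1:ℝ) < 2)
  refine ⟨r₀, (((2*a+1) * ((⌊C⌋ + 1).toNat)^n : ℕ) : ℝ≥0), ?_⟩
  intro r hrr I hIdy x
  have hgood : Real.sqrt n * C ≤ ((2:ℝ)^r) ^ (1-γ) := by
    have h0 : (0:ℝ) ≤ Real.sqrt n * C := mul_nonneg (Real.sqrt_nonneg _) hC.le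
    have h1 : (Real.sqrt n * C)^2 ≤ (2:ℝ)^r := by
      calc (Real.sqrt n * C)^2 ≤ (2:ℝ)^r₀ := hr₀.le
        _ ≤ 2^r := pow_le_pow_right₀ one_le_two hrr
    have h2 : Real.sqrt n * C ≤ Real.sqrt ((2:ℝ)^r) := by
      rw [← Real.sqrt_sq h0]
      exact Real.sqrt_le_sqrt h1
    have h3 : Real.sqrt ((2:ℝ)^r) = ((2:ℝ)^r) ^ ((1:ℝ)/2) := Real.sqrt_eq_rpow _
    have h4 : ((2:ℝ)^r) ^ ((1:ℝ)/2) ≤ ((2:ℝ)^r) ^ (1-γ) := by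
      refine Real.rpow_le_rpow_of_exponent_le ?_ (by linarith)
      calc (1:ℝ) = 1^r := (one_pow r).symm
        _ ≤ 2^r := pow_le_pow_left₀ zero_le_one one_le_two r
    rw [h3] at h2
    linarith
  rcases Nat.eq_zero_or_pos n with hn0 | hn
  · subst hn0
    haveI : IsEmpty {K : Cube 0 // InWhitney 0 r γ I K} := by
      constructor
      rintro ⟨K, ⟨⟨-, -, -, hd⟩, -⟩⟩
      have hIuniv : I.set = Set.univ := Set.eq_univ_of_forall (fun y i => i.elim0)
      rw [hIuniv, frontier_univ] at hd
      have hz : sdist K.set (∅ : Set (E 0)) = 0 := by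
        rw [sdist, Set.image2_empty_right, Real.sInf_empty]
      rw [hz] at hd
      have h1 : 0 < K.side ^ γ * I.side ^ (1-γ) :=
        mul_pos (Real.rpow_pos_of_pos K.side_pos _) (Real.rpow_pos_of_pos I.side_pos _)
      linarith
    rw [tsum_empty]
    exact zero_le
  by_cases hS : ∃ K : {K : Cube n // InWhitney n r γ I K}, x ∈ K.1.dilate C
  swap
  · push_neg at hS
    have hzero : ∀ K : {K : Cube n // InWhitney n r γ I K},
        (K.1.dilate C).indicator (fun _ => (1:ℝ≥0∞)) x = 0 := fun K =>
      Set.indicator_of_notMem (hS K) _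
    rw [tsum_congr hzero, tsum_zero]
    exact zero_le
  obtain ⟨K₀, hK₀x⟩ := hS
  have hxI : x ∈ I.set :=
    WhitneyOverlapAux.mem_I_of_dilate hn hγ1 hC K₀.2.1 hK₀x hgood
  obtain ⟨hrepr01, hrepr02⟩ := WhitneyOverlapAux.dyadic_repr K₀.2.1.1
  set k₀ : ℤ := Int.log 2 K₀.1.side with hk₀
  set T : Finset (ℤ × (Fin n → ℤ)) :=
    Finset.Icc (k₀ - a) (k₀ + a) ×ˢ Fintype.piFinset (fun _ => Finset.Icc 0 ⌊C⌋) with hT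
  let f : {K : Cube n // InWhitney n r γ I K} → ℤ × (Fin n → ℤ) :=
    fun K => (Int.log 2 K.1.side,
      fun i => ⌊K.1.corner i / K.1.side⌋ - ⌈x i / K.1.side - (1+C)/2⌉)
  -- every cube of the family whose dilate contains x is mapped into T, injectively
  have hmaps : ∀ K : {K : Cube n // InWhitney n r γ I K}, x ∈ K.1.dilate C → f K ∈ T := by
    intro K hKx
    obtain ⟨hrepr1, hrepr2⟩ := WhitneyOverlapAux.dyadic_repr K.2.1.1
    rw [hT, Finset.mem_product]
    constructor
    · -- the scale is comparable to that of K₀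
      have rat1 : K.1.side ≤ WhitneyOverlapAux.lam n C γ * K₀.1.side :=
        WhitneyOverlapAux.ratio hn hγ0 hγ1 hC hIdy K₀.2 K.2.1 hK₀x hKx hgood
      have rat2 : K₀.1.side ≤ WhitneyOverlapAux.lam n C γ * K.1.side :=
        WhitneyOverlapAux.ratio hn hγ0 hγ1 hC hIdy K.2 K₀.2.1 hKx hK₀x hgood
      have hl2 : WhitneyOverlapAux.lam n C γ ≤ (2:ℝ)^a := ha.le
      have hp0 : (0:ℝ) < (2:ℝ)^(k₀ : ℤ) := zpow_pos (by norm_num) _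
      have hpk : (0:ℝ) < (2:ℝ)^(Int.log 2 K.1.side : ℤ) := zpow_pos (by norm_num) _
      have hna : (2:ℝ)^((a:ℤ)) = (2:ℝ)^a := zpow_natCast 2 a
      have s1 : (2:ℝ)^(Int.log 2 K.1.side) ≤ (2:ℝ)^(k₀ + a) := by
        rw [zpow_add₀ (two_ne_zero : (2:ℝ) ≠ 0), hna]
        calc (2:ℝ)^(Int.log 2 K.1.side) = K.1.side := hrepr1.symm
          _ ≤ WhitneyOverlapAux.lam n C γ * K₀.1.side := rat1
          _ ≤ (2:ℝ)^a * K₀.1.side := by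
              refine mul_le_mul_of_nonneg_right hl2 K₀.1.side_pos.le
          _ = (2:ℝ)^(k₀:ℤ) * 2^a := by rw [← hrepr01]; ring
      have s2 : (2:ℝ)^(k₀ : ℤ) ≤ (2:ℝ)^(Int.log 2 K.1.side + a) := by
        rw [zpow_add₀ (two_ne_zero : (2:ℝ) ≠ 0), hna]
        calc (2:ℝ)^(k₀:ℤ) = K₀.1.side := hrepr01.symm
          _ ≤ WhitneyOverlapAux.lam n C γ * K.1.side := rat2
          _ ≤ (2:ℝ)^a * K.1.side := by
              refine mul_le_mul_of_nonneg_right hl2 K.1.side_pos.le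
          _ = (2:ℝ)^(Int.log 2 K.1.side : ℤ) * 2^a := by rw [← hrepr1]; ring
      have i1 : Int.log 2 K.1.side ≤ k₀ + a :=
        (zpow_le_zpow_iff_right₀ (one_lt_two : (1:ℝ) < 2)).mp s1
      have i2 : k₀ ≤ Int.log 2 K.1.side + a :=
        (zpow_le_zpow_iff_right₀ (one_lt_two : (1:ℝ) < 2)).mp s2
      show Int.log 2 K.1.side ∈ Finset.Icc (k₀ - (a:ℤ)) (k₀ + (a:ℤ))
      exact Finset.mem_Icc.mpr ⟨by omega, i1⟩
    · -- the integer coordinates lie in a fixed window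
      refine Fintype.mem_piFinset.mpr fun i => ?_
      show ⌊K.1.corner i / K.1.side⌋ - ⌈x i / K.1.side - (1+C)/2⌉ ∈ Finset.Icc (0:ℤ) ⌊C⌋
      obtain ⟨h1, h2⟩ := WhitneyOverlapAux.mem_dilate_iff.mp hKx i
      have hsides : (0:ℝ) < K.1.side := K.1.side_pos
      rw [hrepr2 i] at h1 h2
      have hu : x i / K.1.side < (⌊K.1.corner i / K.1.side⌋ : ℝ) + (1+C)/2 := by
        rw [div_lt_iff₀ hsides]
        nlinarith [h2]
      have hlo : (⌊K.1.corner i / K.1.side⌋ : ℝ) + (1-C)/2 ≤ x i / K.1.side := by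
        rw [le_div_iff₀ hsides]
        nlinarith [h1]
      have hceil1 : ⌈x i / K.1.side - (1+C)/2⌉ ≤ ⌊K.1.corner i / K.1.side⌋ :=
        Int.ceil_le.mpr (by linarith)
      have hceil2 : (x i / K.1.side - (1+C)/2 : ℝ) ≤ (⌈x i / K.1.side - (1+C)/2⌉ : ℝ) :=
        Int.le_ceil _
      refine Finset.mem_Icc.mpr ⟨by omega, ?_⟩
      refine Int.le_floor.mpr ?_
      push_cast
      linarith
  have hinj : ∀ (K K' : {K : Cube n // InWhitney n r γ I K}),
      f K = f K' → K = K' := by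
    intro K K' hfe
    obtain ⟨hrepr1, hrepr2⟩ := WhitneyOverlapAux.dyadic_repr K.2.1.1
    obtain ⟨hrepr1', hrepr2'⟩ := WhitneyOverlapAux.dyadic_repr K'.2.1.1
    have hfst : Int.log 2 K.1.side = Int.log 2 K'.1.side := congrArg Prod.fst hfe
    have hsnd : (fun i => ⌊K.1.corner i / K.1.side⌋ - ⌈x i / K.1.side - (1+C)/2⌉)
        = (fun i => ⌊K'.1.corner i / K'.1.side⌋ - ⌈x i / K'.1.side - (1+C)/2⌉) :=
      congrArg Prod.snd hfe
    have hside : K.1.side = K'.1.side := by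
      rw [hrepr1, hrepr1', hfst]
    have hcorner : K.1.corner = K'.1.corner := by
      refine PiLp.ext fun i => ?_
      have hi := congrFun hsnd i
      rw [← hside] at hi
      have hm : ⌊K.1.corner i / K.1.side⌋ = ⌊K'.1.corner i / K.1.side⌋ := by omega
      rw [hrepr2 i, hrepr2' i, ← hside, hm]
    exact Subtype.ext (WhitneyOverlapAux.cube_eq_of hcorner hside)
  have main : ∀ s : Finset {K : Cube n // InWhitney n r γ I K},
      ∑ K ∈ s, (K.1.dilate C).indicator (fun _ => (1:ℝ≥0∞)) x ≤ (T.card : ℝ≥0∞) := by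
    intro s
    have hsum : ∑ K ∈ s, (K.1.dilate C).indicator (fun _ => (1:ℝ≥0∞)) x
        = ∑ K ∈ s.filter (fun K => x ∈ K.1.dilate C), (1:ℝ≥0∞) := by
      rw [Finset.sum_filter]
      refine Finset.sum_congr rfl fun K _ => ?_
      by_cases h : x ∈ K.1.dilate C <;> simp [h]
    rw [hsum, Finset.sum_const, nsmul_eq_mul, mul_one]
    refine Nat.cast_le.mpr ?_
    refine Finset.card_le_card_of_injOn f ?_ ?_
    · intro K hK
      exact hmaps K (Finset.mem_filter.mp hK).2
    · intro K _ K' _ hfe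
      exact hinj K K' hfe
  have hle : (∑' K : {K : Cube n // InWhitney n r γ I K},
      (K.1.dilate C).indicator (fun _ => (1:ℝ≥0∞)) x) ≤ (T.card : ℝ≥0∞) := by
    rw [ENNReal.tsum_eq_iSup_sum]
    exact iSup_le main
  have hTcard : T.card = (2*a+1) * ((⌊C⌋ + 1).toNat)^n := by
    have h1 : (Finset.Icc (k₀ - a) (k₀ + a)).card = 2*a+1 := by
      rw [Int.card_Icc]
      omega
    have h2 : (Finset.Icc (0:ℤ) ⌊C⌋).card = (⌊C⌋+1).toNat := by
      rw [Int.card_Icc]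
      omega
    rw [hT, Finset.card_product, Fintype.card_piFinset, h1]
    simp [h2, Finset.prod_const]
  rw [Set.indicator_of_mem hxI, mul_one]
  refine le_trans hle ?_
  rw [hTcard]
  simp
end
end

section
/- Let n ≥ 2, 0 < α ≤ 1, let K be a cube in ℝⁿ and C > 1 a constant with n(2/(C−1))² ≤ α/2. Let ν be a locally finite positive measure on ℝⁿ with ν(CK) = 0, where CK is the cube concentric with K of side length C ℓ(K), and suppose 𝒫_α(K, ν) < ∞. Then for every y ∈ K and every t ∈ (ℓ(K)/2, ℓ(K)], one has ∂_t (p_t^α * ν)(y) ≥ 0 and 𝒫_α(K, ν) ≤ C' t ∂_t (p_t^α * ν)(y), where C' depends only on n, α and C. -/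
open MeasureTheory Set
open scoped ENNReal NNReal BigOperators

noncomputable section

section Helpers

lemma coord_le_dist {n : ℕ} (x y : E n) (i : Fin n) : |x i - y i| ≤ dist x y := by
  rw [EuclideanSpace.dist_eq, ← Real.sqrt_sq_eq_abs]
  apply Real.sqrt_le_sqrt
  have he : (x i - y i) ^ 2 = dist (x i) (y i) ^ 2 := by rw [Real.dist_eq, sq_abs]
  rw [he]
  exact Finset.single_le_sum (f := fun j => dist (x j) (y j) ^ 2)
    (fun j _ => sq_nonneg _) (Finset.mem_univ i)

lemma dist_le_of_coords {n : ℕ} (x y : E n) (ℓ : ℝ) (hℓ : 0 ≤ ℓ)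
    (h : ∀ i, |x i - y i| ≤ ℓ) : dist x y ≤ Real.sqrt n * ℓ := by
  rw [EuclideanSpace.dist_eq]
  have hsum : ∑ i, dist (x i) (y i) ^ 2 ≤ (n : ℝ) * ℓ ^ 2 := by
    calc ∑ i, dist (x i) (y i) ^ 2 ≤ ∑ _i : Fin n, ℓ ^ 2 := by
          apply Finset.sum_le_sum
          intro i _
          have := h i
          rw [Real.dist_eq]
          nlinarith [abs_nonneg (x i - y i)]
      _ = (n : ℝ) * ℓ ^ 2 := by simp [mul_comm]
  calc Real.sqrt (∑ i, dist (x i) (y i) ^ 2) ≤ Real.sqrt ((n:ℝ) * ℓ ^ 2) :=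
        Real.sqrt_le_sqrt hsum
    _ = Real.sqrt n * ℓ := by
        rw [Real.sqrt_mul (Nat.cast_nonneg n), Real.sqrt_sq hℓ]

lemma cube_dist_le_s8 {n : ℕ} (K : Cube n) {x y : E n} (hx : x ∈ K.set) (hy : y ∈ K.set) :
    dist x y ≤ Real.sqrt n * K.side := by
  apply dist_le_of_coords x y K.side K.side_pos.le
  intro i
  have h1 := hx i
  have h2 := hy i
  rw [abs_le]
  constructor <;> [linarith [h1.1, h1.2, h2.1, h2.2]; linarith [h1.1, h1.2, h2.1, h2.2]]

lemma cube_isBounded_s8 {n : ℕ} (K : Cube n) : Bornology.IsBounded K.set := by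
  rw [Metric.isBounded_iff]
  exact ⟨Real.sqrt n * K.side, fun x hx y hy => cube_dist_le_s8 K hx hy⟩

lemma cube_diam_le {n : ℕ} (K : Cube n) : Metric.diam K.set ≤ Real.sqrt n * K.side :=
  Metric.diam_le_of_forall_dist_le (mul_nonneg (Real.sqrt_nonneg _) K.side_pos.le)
    (fun x hx y hy => cube_dist_le_s8 K hx hy)

end Helpers

set_option maxHeartbeats 2000000 in
lemma poisson_aux_main
    (n : ℕ) (hn : 2 ≤ n) (α : ℝ) (hα0 : 0 < α) (hα1 : α ≤ 1)
    (C : ℝ) (hC : 1 < C) (hCα : n * (2 / (C - 1)) ^ 2 ≤ α / 2) :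
    ∃ C' : ℝ, 0 < C' ∧
      ∀ K : Cube n, ∀ ν : Measure (E n), IsLocallyFiniteMeasure ν →
        ν (K.dilate C) = 0 → poissonAvgM n α K ν < ⊤ →
        ∀ y ∈ K.set, ∀ t : ℝ, K.side / 2 < t → t ≤ K.side →
          0 ≤ deriv (fun s : ℝ => PtM n α ν y s) t ∧
          poissonAvgM n α K ν
            ≤ ENNReal.ofReal (C' * (t * deriv (fun s : ℝ => PtM n α ν y s) t)) := by
  classical
  have hn1 : (1:ℝ) ≤ (n:ℝ) := by
    have : 1 ≤ n := by omega
    exact_mod_cast this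
  have hn2 : (2:ℝ) ≤ (n:ℝ) := by exact_mod_cast hn
  set q : ℝ := ((n:ℝ) + α) / 2 with hqdef
  have hq0 : 0 < q := by rw [hqdef]; linarith
  have hna : (0:ℝ) ≤ (n:ℝ) + α := by linarith
  have hnafwd : -((n:ℝ) + α) ≤ 0 := by linarith
  refine ⟨2 ^ α * ((1:ℝ) + (n:ℝ)) ^ q * (5 / (2 * α)),
    mul_pos (mul_pos (Real.rpow_pos_of_pos two_pos _)
      (Real.rpow_pos_of_pos (by linarith) _)) (div_pos (by norm_num) (by linarith)), ?_⟩
  intro K ν hνloc hνK hPfin y hy t ht1 ht2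
  have hy' : ∀ i, K.corner i ≤ y i ∧ y i < K.corner i + K.side := hy
  have hℓ : 0 < K.side := K.side_pos
  set ℓ : ℝ := K.side with hℓdef
  have ht0 : 0 < t := lt_trans (by linarith) ht1
  -- facts about C
  have hC1 : (0:ℝ) < C - 1 := by linarith
  have hC4 : 4 * (n:ℝ) ≤ α / 2 * (C - 1) ^ 2 := by
    have h := mul_le_mul_of_nonneg_right hCα (sq_nonneg (C - 1))
    have he : (n:ℝ) * (2 / (C - 1)) ^ 2 * (C - 1) ^ 2 = 4 * n := by
      field_simp
      ring
    linarith [he ▸ h]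
  have hC5 : 5 ≤ C := by nlinarith [hC4, hn2, hα1, hα0, hC1]
  -- a.e. z lies outside the dilated cube
  have hae : ∀ᵐ z ∂ν, z ∉ K.dilate C := by
    rw [MeasureTheory.ae_iff]
    simpa [not_not] using hνK
  -- distance lower bounds for z outside the dilated cube
  have hfar : ∀ z, z ∉ K.dilate C →
      2 * ℓ ≤ dist y z ∧ (n:ℝ) * t ^ 2 ≤ α / 2 * dist y z ^ 2 := by
    intro z hz
    simp only [Cube.dilate, Set.mem_setOf_eq, not_forall] at hz
    obtain ⟨i, hi⟩ := hz
    rw [not_and_or, not_le, not_lt] at hi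
    have hgap : (C - 1) * ℓ / 2 ≤ |y i - z i| := by
      rcases hi with hi | hi
      · calc (C - 1) * ℓ / 2 ≤ y i - z i := by
              have h1 := (hy' i).1
              linarith
          _ ≤ |y i - z i| := le_abs_self _
      · calc (C - 1) * ℓ / 2 ≤ -(y i - z i) := by
              have h1 := (hy' i).2
              linarith
          _ ≤ |y i - z i| := neg_le_abs _
    have hd : (C - 1) * ℓ / 2 ≤ dist y z := hgap.trans (coord_le_dist y z i)
    have hd2ℓ : 2 * ℓ ≤ dist y z := by nlinarith [hd, hℓ, hC5]
    refine ⟨hd2ℓ, ?_⟩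
    have hcl : 0 ≤ (C - 1) * ℓ / 2 := div_nonneg (mul_nonneg hC1.le hℓ.le) (by norm_num)
    have hdsq : ((C - 1) * ℓ / 2) ^ 2 ≤ dist y z ^ 2 := by
      nlinarith [mul_self_le_mul_self hcl hd]
    have h2 : (n:ℝ) * ℓ ^ 2 ≤ α / 2 * ((C - 1) * ℓ / 2) ^ 2 := by
      nlinarith [mul_le_mul_of_nonneg_right hC4 (sq_nonneg ℓ)]
    have htℓ : t ^ 2 ≤ ℓ ^ 2 := by nlinarith [ht0, ht2]
    have h3 : (n:ℝ) * t ^ 2 ≤ (n:ℝ) * ℓ ^ 2 := by nlinarith [htℓ, hn1]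
    have h4 : α / 2 * ((C - 1) * ℓ / 2) ^ 2 ≤ α / 2 * dist y z ^ 2 := by
      nlinarith [hdsq, hα0]
    linarith
  -- basic kernels
  set D : E n → ℝ := fun z => Metric.infDist z K.set with hD
  have hDnn : ∀ z, 0 ≤ D z := fun z => Metric.infDist_nonneg
  have hD0 : ∀ z, 0 < ℓ + D z := fun z => lt_of_lt_of_le hℓ (le_add_of_nonneg_right (hDnn z))
  set F : ℝ → E n → ℝ := fun s z => s ^ α * (s ^ 2 + dist y z ^ 2) ^ (-q) with hF
  set G : ℝ → E n → ℝ := fun s z =>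
    α * s ^ (α - 1) * (s ^ 2 + dist y z ^ 2) ^ (-q)
      + s ^ α * (2 * s * -q * (s ^ 2 + dist y z ^ 2) ^ (-q - 1)) with hG
  set pois : E n → ℝ := fun z => ℓ ^ α / (ℓ + D z) ^ ((n:ℝ) + α) with hpois
  have hpois_eq : ∀ z, pois z = ℓ ^ α * (ℓ + D z) ^ (-((n:ℝ) + α)) := by
    intro z
    simp only [hpois]
    rw [Real.rpow_neg (hD0 z).le, div_eq_mul_inv]
  have hpois_nn : ∀ z, 0 ≤ pois z := by
    intro z
    rw [hpois_eq]
    exact mul_nonneg (Real.rpow_nonneg hℓ.le _) (Real.rpow_nonneg (hD0 z).le _)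
  -- PtM as integral of F
  have hPtM : (fun s : ℝ => PtM n α ν y s) = fun s => ∫ z, F s z ∂ν := by
    funext s
    unfold PtM
    refine integral_congr_ae (Filter.Eventually.of_forall fun z => ?_)
    simp only [hF]
    rw [← hqdef, Real.rpow_neg (by positivity), div_eq_mul_inv]
  -- continuity / measurability
  have hXc : ∀ s : ℝ, Continuous fun z : E n => s ^ 2 + dist y z ^ 2 := by
    intro s
    exact continuous_const.add ((continuous_const.dist continuous_id).pow 2)
  have hXpos : ∀ s : ℝ, s ≠ 0 → ∀ z : E n, 0 < s ^ 2 + dist y z ^ 2 := by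
    intro s hs z
    have h1 : 0 < s ^ 2 := lt_of_le_of_ne (sq_nonneg s) (Ne.symm (pow_ne_zero 2 hs))
    nlinarith [sq_nonneg (dist y z)]
  have hFmeas : ∀ s : ℝ, s ≠ 0 → AEStronglyMeasurable (F s) ν := by
    intro s hs
    apply Continuous.aestronglyMeasurable
    exact continuous_const.mul ((hXc s).rpow_const fun z => Or.inl (hXpos s hs z).ne')
  have hGmeas : AEStronglyMeasurable (G t) ν := by
    apply Continuous.aestronglyMeasurable
    exact (continuous_const.mul ((hXc t).rpow_const fun z => Or.inl (hXpos t ht0.ne' z).ne')).add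
      (continuous_const.mul (continuous_const.mul
        ((hXc t).rpow_const fun z => Or.inl (hXpos t ht0.ne' z).ne')))
  -- pois is integrable
  have hpois_cont : Continuous pois := by
    rw [hpois]
    exact continuous_const.div
      ((continuous_const.add (Metric.continuous_infDist_pt K.set)).rpow_const
        fun z => Or.inl (hD0 z).ne')
      (fun z => (Real.rpow_pos_of_pos (hD0 z) _).ne')
  have hpois_int : Integrable pois ν := by
    refine ⟨hpois_cont.aestronglyMeasurable, ?_⟩
    rw [hasFiniteIntegral_iff_ofReal (Filter.Eventually.of_forall hpois_nn)]
    exact hPfin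
  -- rewriting G
  have hGeq : ∀ s : ℝ, 0 < s → ∀ z, G s z
      = s ^ (α - 1) * (s ^ 2 + dist y z ^ 2) ^ (-q - 1)
        * (α * dist y z ^ 2 - n * s ^ 2) := by
    intro s hs z
    have hX0 : (0:ℝ) < s ^ 2 + dist y z ^ 2 := hXpos s hs.ne' z
    have e1 : s ^ α = s ^ (α - 1) * s := by
      conv_lhs => rw [show α = (α - 1) + 1 by ring]
      rw [Real.rpow_add_one hs.ne']
    have e2 : (s ^ 2 + dist y z ^ 2) ^ (-q) =
        (s ^ 2 + dist y z ^ 2) ^ (-q - 1) * (s ^ 2 + dist y z ^ 2) := by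
      conv_lhs => rw [show -q = (-q - 1) + 1 by ring]
      rw [Real.rpow_add_one hX0.ne']
    simp only [hG]
    rw [e1, e2, hqdef]
    ring
  -- the ball around t
  set ε : ℝ := min (t - ℓ / 2) ℓ with hε
  have hε0 : 0 < ε := lt_min (by linarith) hℓ
  have hball : ∀ s ∈ Metric.ball t ε, ℓ / 2 < s ∧ s < 2 * ℓ := by
    intro s hs
    rw [Metric.mem_ball, Real.dist_eq] at hs
    have h1 := abs_lt.mp hs
    have h2 : ε ≤ t - ℓ / 2 := min_le_left _ _
    have h3 : ε ≤ ℓ := min_le_right _ _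
    constructor <;> [linarith; linarith]
  -- pointwise derivative
  have hdiff : ∀ z : E n, ∀ s ∈ Metric.ball t ε, HasDerivAt (fun u => F u z) (G s z) s := by
    intro z s hs
    have hs0 : 0 < s := lt_trans (by linarith) (hball s hs).1
    have hX0 : (0:ℝ) < s ^ 2 + dist y z ^ 2 := hXpos s hs0.ne' z
    have h1 : HasDerivAt (fun u : ℝ => u ^ α) (α * s ^ (α - 1)) s :=
      Real.hasDerivAt_rpow_const (Or.inl hs0.ne')
    have h2 : HasDerivAt (fun u : ℝ => u ^ 2 + dist y z ^ 2) (2 * s) s := by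
      simpa using (hasDerivAt_pow 2 s).add_const (dist y z ^ 2)
    have h3 : HasDerivAt (fun u : ℝ => (u ^ 2 + dist y z ^ 2) ^ (-q))
        (2 * s * -q * (s ^ 2 + dist y z ^ 2) ^ (-q - 1)) s :=
      h2.rpow_const (Or.inl hX0.ne')
    exact h1.mul h3
  -- uniform bound for the kernel in terms of the Poisson kernel
  have hXq : ∀ z, z ∉ K.dilate C → ∀ s : ℝ,
      (s ^ 2 + dist y z ^ 2) ^ (-q)
        ≤ (3 / 2) ^ ((n:ℝ) + α) * (ℓ + D z) ^ (-((n:ℝ) + α)) := by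
    intro z hz s
    have hd2ℓ := (hfar z hz).1
    have hd0 : 0 < dist y z := lt_of_lt_of_le (by linarith) hd2ℓ
    have hDd : D z ≤ dist y z := by
      rw [hD, dist_comm]
      exact Metric.infDist_le_dist_of_mem hy
    have hld : (2:ℝ) / 3 * (ℓ + D z) ≤ dist y z := by linarith
    have step1 : (s ^ 2 + dist y z ^ 2) ^ (-q) ≤ (dist y z ^ 2) ^ (-q) :=
      Real.rpow_le_rpow_of_nonpos (pow_pos hd0 2)
        (le_add_of_nonneg_left (sq_nonneg s)) (by linarith)
    have step2 : (dist y z ^ 2 : ℝ) ^ (-q) = dist y z ^ (-((n:ℝ) + α)) := by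
      rw [← Real.rpow_natCast (dist y z) 2, ← Real.rpow_mul hd0.le]
      congr 1
      push_cast
      rw [hqdef]; ring
    have step3 : dist y z ^ (-((n:ℝ) + α))
        ≤ ((2:ℝ) / 3 * (ℓ + D z)) ^ (-((n:ℝ) + α)) :=
      Real.rpow_le_rpow_of_nonpos (mul_pos (by norm_num) (hD0 z)) hld hnafwd
    have step4 : ((2:ℝ) / 3 * (ℓ + D z)) ^ (-((n:ℝ) + α))
        = (3 / 2) ^ ((n:ℝ) + α) * (ℓ + D z) ^ (-((n:ℝ) + α)) := by
      rw [Real.mul_rpow (by norm_num) (hD0 z).le]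
      congr 1
      rw [Real.rpow_neg (by norm_num), ← Real.inv_rpow (by norm_num)]
      norm_num
    calc (s ^ 2 + dist y z ^ 2) ^ (-q) ≤ (dist y z ^ 2) ^ (-q) := step1
      _ = dist y z ^ (-((n:ℝ) + α)) := step2
      _ ≤ ((2:ℝ) / 3 * (ℓ + D z)) ^ (-((n:ℝ) + α)) := step3
      _ = (3 / 2) ^ ((n:ℝ) + α) * (ℓ + D z) ^ (-((n:ℝ) + α)) := step4
  set bnd : E n → ℝ := fun z =>
    ((n:ℝ) + α) * ((2 * ℓ) ^ α * (2 / ℓ)) *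
      ((3 / 2) ^ ((n:ℝ) + α) * (ℓ + D z) ^ (-((n:ℝ) + α))) with hbnd
  have hbnd_int : Integrable bnd ν := by
    have heq : bnd = fun z =>
        (((n:ℝ) + α) * ((2 * ℓ) ^ α * (2 / ℓ)) * (3 / 2) ^ ((n:ℝ) + α) / ℓ ^ α) * pois z := by
      funext z
      simp only [hbnd]
      rw [hpois_eq]
      have hl0 : (0:ℝ) < ℓ ^ α := Real.rpow_pos_of_pos hℓ α
      field_simp
    rw [heq]
    exact hpois_int.const_mul _
  have hbound : ∀ᵐ z ∂ν, ∀ s ∈ Metric.ball t ε, ‖G s z‖ ≤ bnd z := by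
    refine hae.mono fun z hz => ?_
    intro s hs
    have hs0 : 0 < s := lt_trans (by linarith) (hball s hs).1
    have hsl : ℓ / 2 < s := (hball s hs).1
    have hsu : s < 2 * ℓ := (hball s hs).2
    have hX0 : (0:ℝ) < s ^ 2 + dist y z ^ 2 := hXpos s hs0.ne' z
    have hd2ℓ := (hfar z hz).1
    have hd0 : 0 < dist y z := lt_of_lt_of_le (by linarith) hd2ℓ
    have e2 : (s ^ 2 + dist y z ^ 2) ^ (-q) =
        (s ^ 2 + dist y z ^ 2) ^ (-q - 1) * (s ^ 2 + dist y z ^ 2) := by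
      conv_lhs => rw [show -q = (-q - 1) + 1 by ring]
      rw [Real.rpow_add_one hX0.ne']
    have hM : |α * dist y z ^ 2 - n * s ^ 2| ≤ ((n:ℝ) + α) * (s ^ 2 + dist y z ^ 2) := by
      rw [abs_le]
      have ha1 : 0 ≤ α * s ^ 2 := mul_nonneg hα0.le (sq_nonneg s)
      have ha2 : 0 ≤ α * dist y z ^ 2 := mul_nonneg hα0.le (sq_nonneg _)
      have ha3 : 0 ≤ (n:ℝ) * s ^ 2 := mul_nonneg (by linarith) (sq_nonneg s)
      have ha4 : 0 ≤ (n:ℝ) * dist y z ^ 2 := mul_nonneg (by linarith) (sq_nonneg _)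
      constructor <;> nlinarith [ha1, ha2, ha3, ha4]
    have hspow : s ^ (α - 1) ≤ (2 * ℓ) ^ α * (2 / ℓ) := by
      rw [Real.rpow_sub hs0, Real.rpow_one, div_eq_mul_inv]
      have h1 : s ^ α ≤ (2 * ℓ) ^ α := Real.rpow_le_rpow hs0.le hsu.le hα0.le
      have h2 : s⁻¹ ≤ 2 / ℓ := by
        rw [show (2:ℝ) / ℓ = (ℓ / 2)⁻¹ by
          rw [div_eq_mul_inv, div_eq_mul_inv, mul_inv, inv_inv]; ring]
        exact inv_anti₀ (by linarith) hsl.le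
      exact mul_le_mul h1 h2 (inv_nonneg.mpr hs0.le) (Real.rpow_nonneg (by linarith) _)
    rw [hGeq s hs0 z]
    have hnn1 : 0 ≤ s ^ (α - 1) := Real.rpow_nonneg hs0.le _
    have hnn2 : 0 ≤ (s ^ 2 + dist y z ^ 2) ^ (-q - 1) := Real.rpow_nonneg hX0.le _
    rw [Real.norm_eq_abs, abs_mul, abs_mul, abs_of_nonneg hnn1, abs_of_nonneg hnn2]
    calc s ^ (α - 1) * (s ^ 2 + dist y z ^ 2) ^ (-q - 1) * |α * dist y z ^ 2 - n * s ^ 2|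
        ≤ s ^ (α - 1) * (s ^ 2 + dist y z ^ 2) ^ (-q - 1)
            * (((n:ℝ) + α) * (s ^ 2 + dist y z ^ 2)) :=
          mul_le_mul_of_nonneg_left hM (mul_nonneg hnn1 hnn2)
      _ = ((n:ℝ) + α) * (s ^ (α - 1)
            * ((s ^ 2 + dist y z ^ 2) ^ (-q - 1) * (s ^ 2 + dist y z ^ 2))) := by ring
      _ = ((n:ℝ) + α) * (s ^ (α - 1) * (s ^ 2 + dist y z ^ 2) ^ (-q)) := by rw [← e2]
      _ ≤ ((n:ℝ) + α) * (((2 * ℓ) ^ α * (2 / ℓ))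
            * ((3 / 2) ^ ((n:ℝ) + α) * (ℓ + D z) ^ (-((n:ℝ) + α)))) := by
          apply mul_le_mul_of_nonneg_left _ hna
          apply mul_le_mul hspow (hXq z hz s) (Real.rpow_nonneg hX0.le _)
            (mul_nonneg (Real.rpow_nonneg (by linarith) _) (div_nonneg (by norm_num) hℓ.le))
      _ = bnd z := by simp only [hbnd]; ring
  -- integrability of F t
  have hFt_nn : ∀ z, 0 ≤ F t z := by
    intro z
    simp only [hF]
    exact mul_nonneg (Real.rpow_nonneg ht0.le _)
      (Real.rpow_nonneg (hXpos t ht0.ne' z).le _)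
  have hFt_int : Integrable (F t) ν := by
    apply Integrable.mono' (hpois_int.const_mul ((3 / 2) ^ ((n:ℝ) + α) / ℓ ^ α * ℓ ^ α))
      (hFmeas t ht0.ne')
    refine hae.mono fun z hz => ?_
    rw [Real.norm_eq_abs, abs_of_nonneg (hFt_nn z)]
    simp only [hF]
    have h1 : t ^ α ≤ ℓ ^ α := Real.rpow_le_rpow ht0.le ht2 hα0.le
    have h2 := hXq z hz t
    have hl0 : (0:ℝ) < ℓ ^ α := Real.rpow_pos_of_pos hℓ α
    calc t ^ α * (t ^ 2 + dist y z ^ 2) ^ (-q)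
        ≤ ℓ ^ α * ((3 / 2) ^ ((n:ℝ) + α) * (ℓ + D z) ^ (-((n:ℝ) + α))) :=
          mul_le_mul h1 h2 (Real.rpow_nonneg (hXpos t ht0.ne' z).le _) hl0.le
      _ = (3 / 2) ^ ((n:ℝ) + α) / ℓ ^ α * ℓ ^ α * pois z := by
          rw [hpois_eq]
          field_simp
  -- apply differentiation under the integral sign
  have hFev : ∀ᶠ s in nhds t, AEStronglyMeasurable (F s) ν := by
    refine Filter.eventually_of_mem (Metric.ball_mem_nhds t hε0) fun s hs => ?_
    have hs0 : 0 < s := lt_trans (by linarith) (hball s hs).1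
    exact hFmeas s hs0.ne'
  obtain ⟨hGt_int, hHD⟩ :=
    hasDerivAt_integral_of_dominated_loc_of_deriv_le (Metric.ball_mem_nhds t hε0) hFev hFt_int hGmeas hbound hbnd_int
      (hae.mono fun z _ s hs => hdiff z s hs)
  have hderiv_eq : deriv (fun s : ℝ => PtM n α ν y s) t = ∫ z, G t z ∂ν := by
    rw [hPtM]
    exact hHD.deriv
  -- key pointwise inequality for z outside the dilated cube
  have hkey : ∀ z, z ∉ K.dilate C → F t z ≤ 5 / (2 * α) * t * G t z := by
    intro z hz
    obtain ⟨hd2ℓ, hnt⟩ := hfar z hz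
    have hd0 : 0 < dist y z := lt_of_lt_of_le (by linarith) hd2ℓ
    have hX0 : (0:ℝ) < t ^ 2 + dist y z ^ 2 := hXpos t ht0.ne' z
    have htd : t ≤ dist y z / 2 := by linarith
    have htd2 : t ^ 2 ≤ dist y z ^ 2 / 4 := by nlinarith [ht0]
    have hmain2 : 2 * α * (t ^ 2 + dist y z ^ 2)
        ≤ 5 * (α * dist y z ^ 2 - n * t ^ 2) := by
      nlinarith [hnt, mul_le_mul_of_nonneg_left htd2 hα0.le]
    have hXle : t ^ 2 + dist y z ^ 2
        ≤ 5 / (2 * α) * (α * dist y z ^ 2 - (n:ℝ) * t ^ 2) := by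
      rw [div_mul_eq_mul_div, le_div_iff₀ (by linarith)]
      linarith [hmain2]
    rw [hGeq t ht0 z]
    simp only [hF]
    have e1 : t ^ α = t ^ (α - 1) * t := by
      conv_lhs => rw [show α = (α - 1) + 1 by ring]
      rw [Real.rpow_add_one ht0.ne']
    have e2 : (t ^ 2 + dist y z ^ 2) ^ (-q) =
        (t ^ 2 + dist y z ^ 2) ^ (-q - 1) * (t ^ 2 + dist y z ^ 2) := by
      conv_lhs => rw [show -q = (-q - 1) + 1 by ring]
      rw [Real.rpow_add_one hX0.ne']
    rw [e1, e2]
    have hnn : 0 ≤ t ^ (α - 1) * (t ^ 2 + dist y z ^ 2) ^ (-q - 1) * t :=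
      mul_nonneg (mul_nonneg (Real.rpow_nonneg ht0.le _) (Real.rpow_nonneg hX0.le _)) ht0.le
    calc t ^ (α - 1) * t * ((t ^ 2 + dist y z ^ 2) ^ (-q - 1) * (t ^ 2 + dist y z ^ 2))
        = t ^ (α - 1) * (t ^ 2 + dist y z ^ 2) ^ (-q - 1) * t
            * (t ^ 2 + dist y z ^ 2) := by ring
      _ ≤ t ^ (α - 1) * (t ^ 2 + dist y z ^ 2) ^ (-q - 1) * t
            * (5 / (2 * α) * (α * dist y z ^ 2 - (n:ℝ) * t ^ 2)) :=
          mul_le_mul_of_nonneg_left hXle hnn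
      _ = 5 / (2 * α) * t * (t ^ (α - 1) * (t ^ 2 + dist y z ^ 2) ^ (-q - 1)
            * (α * dist y z ^ 2 - n * t ^ 2)) := by ring
  have hGt_nn : ∀ᵐ z ∂ν, 0 ≤ G t z := by
    refine hae.mono fun z hz => ?_
    have h1 := hkey z hz
    have h2 := hFt_nn z
    have hc : 0 < 5 / (2 * α) * t := mul_pos (div_pos (by norm_num) (by linarith)) ht0
    exact (mul_nonneg_iff_of_pos_left hc).mp (le_trans h2 h1)
  -- the pointwise comparison between pois and F t
  have hpois_le_F : ∀ z, pois z ≤ 2 ^ α * (1 + (n:ℝ)) ^ q * F t z := by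
    intro z
    have hX0 : (0:ℝ) < t ^ 2 + dist y z ^ 2 := hXpos t ht0.ne' z
    have hsq1 : (1:ℝ) ≤ Real.sqrt n := by
      rw [show (1:ℝ) = Real.sqrt 1 by simp]
      exact Real.sqrt_le_sqrt hn1
    have hdd : dist y z ≤ Real.sqrt n * (ℓ + D z) := by
      have h1 : dist z y ≤ D z + Metric.diam K.set :=
        Metric.dist_le_infDist_add_diam (cube_isBounded_s8 K) hy
      have h2 : dist z y ≤ D z + Real.sqrt n * ℓ := h1.trans (by linarith [cube_diam_le K])
      rw [dist_comm] at h2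
      nlinarith [hDnn z, hsq1, hℓ, mul_nonneg (sub_nonneg.mpr hsq1) (hDnn z)]
    have hdsq : dist y z ^ 2 ≤ (n:ℝ) * (ℓ + D z) ^ 2 := by
      have h3 := mul_self_le_mul_self (dist_nonneg (α := E n) (x := y) (y := z)) hdd
      have h4 := Real.sq_sqrt (show (0:ℝ) ≤ (n:ℝ) by linarith)
      nlinarith [h3, h4]
    have hXub : t ^ 2 + dist y z ^ 2 ≤ (1 + (n:ℝ)) * (ℓ + D z) ^ 2 := by
      have h5 : t ^ 2 ≤ (ℓ + D z) ^ 2 := by nlinarith [ht0, ht2, hDnn z, hℓ]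
      nlinarith [h5, hdsq]
    have hXlb : ((1 + (n:ℝ)) * (ℓ + D z) ^ 2) ^ (-q) ≤ (t ^ 2 + dist y z ^ 2) ^ (-q) :=
      Real.rpow_le_rpow_of_nonpos hX0 hXub (by linarith)
    have hsplit : ((1 + (n:ℝ)) * (ℓ + D z) ^ 2) ^ (-q)
        = (1 + (n:ℝ)) ^ (-q) * (ℓ + D z) ^ (-((n:ℝ) + α)) := by
      rw [Real.mul_rpow (by linarith) (sq_nonneg _)]
      congr 1
      rw [← Real.rpow_natCast (ℓ + D z) 2, ← Real.rpow_mul (hD0 z).le]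
      congr 1
      push_cast
      rw [hqdef]; ring
    have hFlb : (ℓ / 2) ^ α * ((1 + (n:ℝ)) ^ (-q) * (ℓ + D z) ^ (-((n:ℝ) + α))) ≤ F t z := by
      simp only [hF]
      calc (ℓ / 2) ^ α * ((1 + (n:ℝ)) ^ (-q) * (ℓ + D z) ^ (-((n:ℝ) + α)))
          = (ℓ / 2) ^ α * ((1 + (n:ℝ)) * (ℓ + D z) ^ 2) ^ (-q) := by rw [hsplit]
        _ ≤ (ℓ / 2) ^ α * (t ^ 2 + dist y z ^ 2) ^ (-q) :=
            mul_le_mul_of_nonneg_left hXlb (Real.rpow_nonneg (by linarith) _)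
        _ ≤ t ^ α * (t ^ 2 + dist y z ^ 2) ^ (-q) :=
            mul_le_mul_of_nonneg_right
              (Real.rpow_le_rpow (by linarith) ht1.le hα0.le)
              (Real.rpow_nonneg hX0.le _)
    have h1n : (0:ℝ) < 1 + (n:ℝ) := by linarith
    have hqq : ((1:ℝ) + (n:ℝ)) ^ q * ((1:ℝ) + (n:ℝ)) ^ (-q) = 1 := by
      rw [← Real.rpow_add h1n]
      simp
    have hl2 : (2:ℝ) ^ α * (ℓ / 2) ^ α = ℓ ^ α := by
      rw [← Real.mul_rpow (by norm_num) (by linarith), show (2:ℝ) * (ℓ / 2) = ℓ by ring]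
    calc pois z = ℓ ^ α * (ℓ + D z) ^ (-((n:ℝ) + α)) := hpois_eq z
      _ = 2 ^ α * (1 + (n:ℝ)) ^ q
            * ((ℓ / 2) ^ α * ((1 + (n:ℝ)) ^ (-q) * (ℓ + D z) ^ (-((n:ℝ) + α)))) := by
          rw [show (2:ℝ) ^ α * (1 + (n:ℝ)) ^ q
              * ((ℓ / 2) ^ α * ((1 + (n:ℝ)) ^ (-q) * (ℓ + D z) ^ (-((n:ℝ) + α))))
              = 2 ^ α * (ℓ / 2) ^ α * (ℓ + D z) ^ (-((n:ℝ) + α))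
                * ((1 + (n:ℝ)) ^ q * (1 + (n:ℝ)) ^ (-q)) by ring, hqq, mul_one, hl2]
      _ ≤ 2 ^ α * (1 + (n:ℝ)) ^ q * F t z := by
          apply mul_le_mul_of_nonneg_left hFlb
          exact mul_nonneg (Real.rpow_nonneg (by norm_num) _) (Real.rpow_nonneg h1n.le _)
  -- conclusion
  constructor
  · rw [hderiv_eq]
    exact integral_nonneg_of_ae hGt_nn
  · rw [hderiv_eq]
    have hpm : poissonAvgM n α K ν = ENNReal.ofReal (∫ z, pois z ∂ν) := by
      rw [ofReal_integral_eq_lintegral_ofReal hpois_int (Filter.Eventually.of_forall hpois_nn)]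
      rfl
    rw [hpm]
    apply ENNReal.ofReal_le_ofReal
    have step1 : ∫ z, pois z ∂ν ≤ 2 ^ α * (1 + (n:ℝ)) ^ q * ∫ z, F t z ∂ν := by
      rw [← integral_const_mul]
      exact integral_mono hpois_int (hFt_int.const_mul _) hpois_le_F
    have step2 : ∫ z, F t z ∂ν ≤ 5 / (2 * α) * t * ∫ z, G t z ∂ν := by
      rw [← integral_const_mul]
      exact integral_mono_ae hFt_int (hGt_int.const_mul _) (hae.mono fun z hz => hkey z hz)
    have hcc : (0:ℝ) ≤ 2 ^ α * (1 + (n:ℝ)) ^ q :=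
      mul_nonneg (Real.rpow_nonneg (by norm_num) _) (Real.rpow_nonneg (by linarith) _)
    calc ∫ z, pois z ∂ν ≤ 2 ^ α * (1 + (n:ℝ)) ^ q * ∫ z, F t z ∂ν := step1
      _ ≤ 2 ^ α * (1 + (n:ℝ)) ^ q * (5 / (2 * α) * t * ∫ z, G t z ∂ν) :=
          mul_le_mul_of_nonneg_left step2 hcc
      _ = 2 ^ α * (1 + (n:ℝ)) ^ q * (5 / (2 * α)) * (t * ∫ z, G t z ∂ν) := by ring

/-- If `ν` is a locally finite positive measure vanishing on the
dilate `CK` (with `n(2/(C−1))² ≤ α/2`), then on the Whitney band over `K` the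
`t`-derivative of the Poisson extension of `ν` is nonnegative and controls the
Poisson average: `𝒫_α(K, ν) ≤ C' t ∂_t(p_t^α * ν)(y)`. -/
theorem poisson_average_controlled_by_derivative
    (n : ℕ) (hn : 2 ≤ n) (α : ℝ) (hα0 : 0 < α) (hα1 : α ≤ 1)
    (C : ℝ) (hC : 1 < C) (hCα : n * (2 / (C - 1)) ^ 2 ≤ α / 2) :
    ∃ C' : ℝ, 0 < C' ∧
      ∀ K : Cube n, ∀ ν : Measure (E n), IsLocallyFiniteMeasure ν →
        ν (K.dilate C) = 0 → poissonAvgM n α K ν < ⊤ →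
        ∀ y ∈ K.set, ∀ t : ℝ, K.side / 2 < t → t ≤ K.side →
          0 ≤ deriv (fun s : ℝ => PtM n α ν y s) t ∧
          poissonAvgM n α K ν
            ≤ ENNReal.ofReal (C' * (t * deriv (fun s : ℝ => PtM n α ν y s) t)) :=
  poisson_aux_main n hn α hα0 hα1 C hC hCα

end
end
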